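/- arXiv:2507.18942 — 7 statements merged into one kernel-verified Lean document; each statement's English description precedes it below -/
import Mathlib

section
/- Any local flow map θ for V on I₀ is continuous on I₀ × I₀ × ℝⁿ; moreover the map (τ, τ₀, x) ↦ V(τ, θ(τ, τ₀, x)), which equals the partial derivative ∂θ/∂τ, is continuous on I₀ × I₀ × ℝⁿ. -/
/-!
The mean value inequality bounds `‖θ τ τ₀ x - θ σ τ₀ x‖` by `M |τ - σ|`, where `M` bounds `V`.
For two solutions on an interval of length `L < 1 / C`, the mean value inequality taken up to
the point `s₁` where their distance `g` is maximal gives `g s₁ ≤ g t₀ + C L g s₁`, so the distance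
stays below `(1 - C L)⁻¹` times the initial one. With `θ τ₀ τ₀ x = x` this makes
`(τ₀, x) ↦ θ τ τ₀ x` Lipschitz uniformly in `τ`, and a map that is continuous in `τ` and uniformly
Lipschitz in the remaining variables is jointly continuous.
-/

/-- A *local flow map* for `V` on `I₀`: for every `(τ₀, x) ∈ I₀ × ℝⁿ`, the curve
`τ ↦ θ τ τ₀ x` is differentiable on `I₀`, satisfies `θ τ₀ τ₀ x = x`, and
`∂θ/∂τ (τ, τ₀, x) = V (τ, θ τ τ₀ x)` for all `τ ∈ I₀`. -/
def IsLocalFlowMap {n : ℕ}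
    (V : ℝ × EuclideanSpace ℝ (Fin n) → EuclideanSpace ℝ (Fin n))
    (I₀ : Set ℝ)
    (θ : ℝ → ℝ → EuclideanSpace ℝ (Fin n) → EuclideanSpace ℝ (Fin n)) : Prop :=
  ∀ τ₀ ∈ I₀, ∀ x : EuclideanSpace ℝ (Fin n),
    θ τ₀ τ₀ x = x ∧
    ∀ τ ∈ I₀, HasDerivAt (fun s => θ s τ₀ x) (V (τ, θ τ τ₀ x)) τ

open Set

section
variable {E : Type*} [NormedAddCommGroup E] [NormedSpace ℝ E]

theorem norm_sub_le_of_hasDerivAt_of_lipschitz {V : ℝ × E → E} {C L : ℝ} (hC : 0 ≤ C)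
    (hCL : C * L < 1) (hV : ∀ τ y₁ y₂, ‖V (τ, y₁) - V (τ, y₂)‖ ≤ C * ‖y₁ - y₂‖)
    {γ₁ γ₂ : ℝ → E} {t₀ t : ℝ} (ht : |t - t₀| ≤ L)
    (h₁ : ∀ s ∈ uIcc t₀ t, HasDerivAt γ₁ (V (s, γ₁ s)) s)
    (h₂ : ∀ s ∈ uIcc t₀ t, HasDerivAt γ₂ (V (s, γ₂ s)) s) :
    ‖γ₁ t - γ₂ t‖ ≤ (1 - C * L)⁻¹ * ‖γ₁ t₀ - γ₂ t₀‖ := by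
  set g : ℝ → ℝ := fun s => ‖γ₁ s - γ₂ s‖
  have hg : ContinuousOn g (uIcc t₀ t) := fun s hs =>
    ((h₁ s hs).continuousAt.sub (h₂ s hs).continuousAt).norm.continuousWithinAt
  obtain ⟨s₁, hs₁, hmax⟩ := isCompact_uIcc.exists_isMaxOn nonempty_uIcc hg
  have hmvt : ‖(γ₁ s₁ - γ₂ s₁) - (γ₁ t₀ - γ₂ t₀)‖ ≤ C * g s₁ * ‖s₁ - t₀‖ :=
    convex_uIcc t₀ t |>.norm_image_sub_le_of_norm_hasDerivWithin_le
      (fun s hs => ((h₁ s hs).sub (h₂ s hs)).hasDerivWithinAt)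
      (fun s hs => (hV s _ _).trans (mul_le_mul_of_nonneg_left (hmax hs) hC))
      left_mem_uIcc hs₁
  have hs₁L : ‖s₁ - t₀‖ ≤ L := (abs_sub_left_of_mem_uIcc hs₁).trans ht
  have hbound : (1 - C * L) * g s₁ ≤ g t₀ := by
    have := norm_sub_norm_le (γ₁ s₁ - γ₂ s₁) (γ₁ t₀ - γ₂ t₀)
    nlinarith [mul_le_mul_of_nonneg_left hs₁L (mul_nonneg hC (norm_nonneg (γ₁ s₁ - γ₂ s₁)))]
  exact (hmax right_mem_uIcc).trans ((le_inv_mul_iff₀ (by linarith)).2 hbound)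

end

namespace IsLocalFlowMap

variable {n : ℕ} {V : ℝ × EuclideanSpace ℝ (Fin n) → EuclideanSpace ℝ (Fin n)} {I : Set ℝ}
  {θ : ℝ → ℝ → EuclideanSpace ℝ (Fin n) → EuclideanSpace ℝ (Fin n)}

theorem continuousOn_curve (hθ : IsLocalFlowMap V I θ) {τ₀ : ℝ} (hτ₀ : τ₀ ∈ I)
    (x : EuclideanSpace ℝ (Fin n)) : ContinuousOn (fun τ => θ τ τ₀ x) I :=
  fun τ hτ => ((hθ τ₀ hτ₀ x).2 τ hτ).continuousAt.continuousWithinAt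

theorem norm_sub_le_mul_abs (hθ : IsLocalFlowMap V I θ) (hI : Convex ℝ I) {M : ℝ}
    (hM : ∀ p, ‖V p‖ ≤ M) {τ₀ τ σ : ℝ} (hτ₀ : τ₀ ∈ I) (hτ : τ ∈ I) (hσ : σ ∈ I)
    (x : EuclideanSpace ℝ (Fin n)) : ‖θ τ τ₀ x - θ σ τ₀ x‖ ≤ M * |τ - σ| :=
  hI.norm_image_sub_le_of_norm_hasDerivWithin_le
    (fun s hs => ((hθ τ₀ hτ₀ x).2 s hs).hasDerivWithinAt) (fun _ _ => hM _) hσ hτ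

theorem lipschitzOnWith_initialCondition {a b C M : ℝ} (hθ : IsLocalFlowMap V (Ioo a b) θ)
    (hC : 0 ≤ C) (hCL : C * (b - a) < 1)
    (hV : ∀ τ y₁ y₂, ‖V (τ, y₁) - V (τ, y₂)‖ ≤ C * ‖y₁ - y₂‖) (hM : ∀ p, ‖V p‖ ≤ M)
    {τ : ℝ} (hτ : τ ∈ Ioo a b) :
    LipschitzOnWith ((1 - C * (b - a))⁻¹ * (1 + M)).toNNReal (fun p => θ τ p.1 p.2)
      (Ioo a b ×ˢ univ) := by
  refine LipschitzOnWith.of_dist_le' ?_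
  rintro ⟨τ₀, x⟩ ⟨hτ₀ : τ₀ ∈ Ioo a b, -⟩ ⟨τ₀', x'⟩ ⟨hτ₀' : τ₀' ∈ Ioo a b, -⟩
  have hM0 : 0 ≤ M := (norm_nonneg _).trans (hM 0)
  have hdist₁ : |τ₀ - τ₀'| ≤ dist (τ₀, x) (τ₀', x') := by
    rw [Prod.dist_eq, ← Real.dist_eq]; exact le_max_left _ _
  have hdist₂ : ‖x - x'‖ ≤ dist (τ₀, x) (τ₀', x') := by
    rw [Prod.dist_eq, ← dist_eq_norm]; exact le_max_right _ _
  have hinit : ‖θ τ₀ τ₀ x - θ τ₀ τ₀' x'‖ ≤ ‖x - x'‖ + M * |τ₀ - τ₀'| := by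
    have hθ₀ := hθ.norm_sub_le_mul_abs (convex_Ioo a b) hM hτ₀' hτ₀' hτ₀ x'
    rw [(hθ τ₀' hτ₀' x').1, abs_sub_comm] at hθ₀
    rw [(hθ τ₀ hτ₀ x).1]
    linarith [norm_sub_le_norm_sub_add_norm_sub x x' (θ τ₀ τ₀' x')]
  have hlen : |τ - τ₀| ≤ b - a := by
    rw [abs_le]; constructor <;> linarith [hτ.1, hτ.2, hτ₀.1, hτ₀.2]
  have hsub : uIcc τ₀ τ ⊆ Ioo a b := ordConnected_Ioo.uIcc_subset hτ₀ hτ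
  rw [dist_eq_norm]
  calc ‖θ τ τ₀ x - θ τ τ₀' x'‖ ≤ (1 - C * (b - a))⁻¹ * ‖θ τ₀ τ₀ x - θ τ₀ τ₀' x'‖ :=
        norm_sub_le_of_hasDerivAt_of_lipschitz (γ₁ := fun s => θ s τ₀ x)
          (γ₂ := fun s => θ s τ₀' x') hC hCL hV hlen
          (fun s hs => (hθ τ₀ hτ₀ x).2 s (hsub hs)) (fun s hs => (hθ τ₀' hτ₀' x').2 s (hsub hs))
    _ ≤ (1 - C * (b - a))⁻¹ * (1 + M) * dist (τ₀, x) (τ₀', x') := by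
        rw [mul_assoc]
        gcongr
        nlinarith [mul_le_mul_of_nonneg_left hdist₁ hM0]

end IsLocalFlowMap

theorem stmt_2_general {n : ℕ}
    (V : ℝ × EuclideanSpace ℝ (Fin n) → EuclideanSpace ℝ (Fin n))
    (C : ℝ) (hC : 0 < C)
    (hVcont : Continuous V)
    (hVbdd : ∃ M : ℝ, ∀ p, ‖V p‖ ≤ M)
    (hVlip : ∀ (τ : ℝ) (y₁ y₂ : EuclideanSpace ℝ (Fin n)),
      ‖V (τ, y₁) - V (τ, y₂)‖ ≤ C * ‖y₁ - y₂‖)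
    (a b : ℝ) (hlen : b - a < 1 / C)
    (θ : ℝ → ℝ → EuclideanSpace ℝ (Fin n) → EuclideanSpace ℝ (Fin n))
    (hθ : IsLocalFlowMap V (Set.Ioo a b) θ) :
    ContinuousOn (fun p : ℝ × ℝ × EuclideanSpace ℝ (Fin n) => θ p.1 p.2.1 p.2.2)
      (Set.Ioo a b ×ˢ Set.Ioo a b ×ˢ (Set.univ : Set (EuclideanSpace ℝ (Fin n)))) ∧
    ContinuousOn (fun p : ℝ × ℝ × EuclideanSpace ℝ (Fin n) => V (p.1, θ p.1 p.2.1 p.2.2))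
      (Set.Ioo a b ×ˢ Set.Ioo a b ×ˢ (Set.univ : Set (EuclideanSpace ℝ (Fin n)))) := by
  obtain ⟨M, hM⟩ := hVbdd
  have hCL : C * (b - a) < 1 := by rwa [← lt_div_iff₀' hC]
  have hθcont : ContinuousOn (fun p : ℝ × ℝ × EuclideanSpace ℝ (Fin n) => θ p.1 p.2.1 p.2.2)
      (Ioo a b ×ˢ Ioo a b ×ˢ univ) :=
    continuousOn_prod_of_continuousOn_lipschitzOnWith' _ _
      (fun _ hτ => hθ.lipschitzOnWith_initialCondition hC.le hCL hVlip hM hτ)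
      (fun p hp => hθ.continuousOn_curve hp.1 p.2)
  exact ⟨hθcont, hVcont.comp_continuousOn (continuousOn_fst.prodMk hθcont)⟩

/-- **Continuity of the local flow map.**
Let `V : ℝ × ℝⁿ → ℝⁿ` be continuous and bounded, uniformly Lipschitz in the second variable
with constant `C > 0`, and let `I₀ = Ioo a b` be an open interval of length less than `1/C`.
Then any local flow map `θ` for `V` on `I₀` is continuous on `I₀ × I₀ × ℝⁿ`, and the map
`(τ, τ₀, x) ↦ V (τ, θ τ τ₀ x)` (which equals `∂θ/∂τ`) is continuous on `I₀ × I₀ × ℝⁿ`. -/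
theorem stmt_2 {n : ℕ} (hn : 1 ≤ n)
    (V : ℝ × EuclideanSpace ℝ (Fin n) → EuclideanSpace ℝ (Fin n))
    (C : ℝ) (hC : 0 < C)
    (hVcont : Continuous V)
    (hVbdd : ∃ M : ℝ, ∀ p, ‖V p‖ ≤ M)
    (hVlip : ∀ (τ : ℝ) (y₁ y₂ : EuclideanSpace ℝ (Fin n)),
      ‖V (τ, y₁) - V (τ, y₂)‖ ≤ C * ‖y₁ - y₂‖)
    (a b : ℝ) (hab : a < b) (hlen : b - a < 1 / C)
    (θ : ℝ → ℝ → EuclideanSpace ℝ (Fin n) → EuclideanSpace ℝ (Fin n))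
    (hθ : IsLocalFlowMap V (Set.Ioo a b) θ) :
    ContinuousOn (fun p : ℝ × ℝ × EuclideanSpace ℝ (Fin n) => θ p.1 p.2.1 p.2.2)
      (Set.Ioo a b ×ˢ Set.Ioo a b ×ˢ (Set.univ : Set (EuclideanSpace ℝ (Fin n)))) ∧
    ContinuousOn (fun p : ℝ × ℝ × EuclideanSpace ℝ (Fin n) => V (p.1, θ p.1 p.2.1 p.2.2))
      (Set.Ioo a b ×ˢ Set.Ioo a b ×ˢ (Set.univ : Set (EuclideanSpace ℝ (Fin n)))) :=
  stmt_2_general V C hC hVcont hVbdd hVlip a b hlen θ hθ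
end

section
/- Assume in addition that for every τ ∈ ℝ the map y ↦ V(τ, y) is Fréchet differentiable and that the map (τ, y) ↦ D_yV(τ, y) is continuous on ℝ × ℝⁿ. Let θ be a local flow map for V on I₀, fix τ₀ ∈ I₀ and x ∈ ℝⁿ, and let Y(τ) := D_x θ(τ, τ₀, x) ∈ L(ℝⁿ, ℝⁿ) denote the Fréchet derivative of θ with respect to the third variable. Then Y satisfies the linear variational equation: Y(τ₀) = id, the map τ ↦ Y(τ) is differentiable on I₀, and Y'(τ) = D_yV(τ, θ(τ, τ₀, x)) ∘ Y(τ) for all τ ∈ I₀. -/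
/-! Along the trajectory `s ↦ θ s τ₀ x` the variational equation `Y' = D_yV (s, θ s τ₀ x) ∘ Y`,
`Y τ₀ = id`, is a linear ODE with coefficients bounded by `C`; on an interval of length
`< 1 / C` Picard–Lindelöf solves it. Grönwall's inequality, run forwards and backwards from `τ₀`,
shows first that the flow is `exp (C (b - a))`-Lipschitz in the initial value, and then, since
`D_yV` is uniformly continuous near the compact trajectory, that
`θ τ τ₀ (x + h) - θ τ τ₀ x - Y τ h` solves the variational equation up to a forcing term that
is `o(‖h‖)`, hence is itself `o(‖h‖)`. So `Y τ` is the derivative of `θ τ τ₀` at `x`. -/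

open Set Filter Topology Metric Real

theorem Continuous.exists_pos_forall_mem_Icc_forall_mem_ball_dist_lt {E X : Type*}
    [NormedAddCommGroup E] [PseudoMetricSpace X] {G : ℝ × E → X} (hG : Continuous G)
    {γ : ℝ → E} {p q ε : ℝ} (hγ : ContinuousOn γ (Icc p q)) (hε : 0 < ε) :
    ∃ δ > 0, ∀ t ∈ Icc p q, ∀ y ∈ ball (γ t) δ, dist (G (t, y)) (G (t, γ t)) < ε := by
  have hcont : ContinuousOn (Function.uncurry fun (h : E) t => G (t, γ t + h))
      (univ ×ˢ Icc p q) :=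
    hG.comp_continuousOn (continuousOn_snd.prodMk
      ((hγ.comp continuousOn_snd fun r hr => hr.2).add continuousOn_fst))
  obtain ⟨v, hv, hvG⟩ := isCompact_Icc.mem_uniformity_of_prod hcont (mem_univ 0)
    (dist_mem_uniformity hε)
  rw [nhdsWithin_univ] at hv
  obtain ⟨δ, hδ, hball⟩ := Metric.mem_nhds_iff.1 hv
  refine ⟨δ, hδ, fun t ht y hy => ?_⟩
  have hyv : y - γ t ∈ v := hball (by rwa [mem_ball_zero_iff, ← dist_eq_norm])
  simpa using hvG (y - γ t) hyv t ht

section Estimates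

variable {E : Type*} [NormedAddCommGroup E] [NormedSpace ℝ E]

theorem norm_le_gronwallBound_of_norm_deriv_le {f f' : ℝ → E} {δ K ε p q τ₀ : ℝ}
    (hK : 0 ≤ K) (hε : 0 ≤ ε) (hτ₀ : τ₀ ∈ Ioo p q)
    (hf : ContinuousOn f (Icc p q)) (hf' : ∀ t ∈ Ioo p q, HasDerivAt f (f' t) t)
    (h₀ : ‖f τ₀‖ ≤ δ) (bound : ∀ t ∈ Ioo p q, ‖f' t‖ ≤ K * ‖f t‖ + ε) :
    ∀ t ∈ Icc p q, ‖f t‖ ≤ gronwallBound δ K ε (q - p) := by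
  have hmono := gronwallBound_mono ((norm_nonneg _).trans h₀) hε hK
  obtain ⟨hpτ₀, hτ₀q⟩ := hτ₀
  intro t ht
  rcases le_total τ₀ t with hτ₀t | htτ₀
  · have hsub : Ico τ₀ q ⊆ Ioo p q := fun s hs => ⟨hpτ₀.trans_le hs.1, hs.2⟩
    have hright := norm_le_gronwallBound_of_norm_deriv_right_le
      (hf.mono (Icc_subset_Icc hpτ₀.le le_rfl))
      (fun s hs => (hf' s (hsub hs)).hasDerivWithinAt) h₀ (fun s hs => bound s (hsub hs))
      t ⟨hτ₀t, ht.2⟩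
    exact hright.trans (hmono (by linarith [ht.2]))
  · -- reflect `[p, τ₀]` onto `[τ₀, 2 τ₀ - p]` by `s ↦ 2 τ₀ - s`
    have hsub : ∀ s ∈ Ico τ₀ (2 * τ₀ - p), 2 * τ₀ - s ∈ Ioo p q := fun s hs =>
      ⟨by linarith [hs.2], by linarith [hs.1]⟩
    have hleft := norm_le_gronwallBound_of_norm_deriv_right_le
      (f := fun s => f (2 * τ₀ - s)) (f' := fun s => -f' (2 * τ₀ - s)) (δ := δ)
      (hf.comp (by fun_prop) fun s hs => ⟨by linarith [hs.2], by linarith [hs.1]⟩)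
      (fun s hs => ((hf' _ (hsub s hs)).comp_const_sub (2 * τ₀) s).hasDerivWithinAt)
      (by rwa [two_mul, add_sub_cancel_right])
      (fun s hs => by simpa using bound _ (hsub s hs))
      (2 * τ₀ - t) ⟨by linarith, by linarith [ht.1]⟩
    rw [sub_sub_cancel] at hleft
    exact hleft.trans (hmono (by linarith [ht.1]))

theorem norm_sub_le_of_trajectories {V : ℝ × E → E} {C p q τ₀ : ℝ} (hC : 0 ≤ C)
    (hV : ∀ t y₁ y₂, ‖V (t, y₁) - V (t, y₂)‖ ≤ C * ‖y₁ - y₂‖) (hτ₀ : τ₀ ∈ Ioo p q)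
    {f g : ℝ → E} (hf : ∀ t ∈ Icc p q, HasDerivAt f (V (t, f t)) t)
    (hg : ∀ t ∈ Icc p q, HasDerivAt g (V (t, g t)) t) :
    ∀ t ∈ Icc p q, ‖f t - g t‖ ≤ ‖f τ₀ - g τ₀‖ * exp (C * (q - p)) := by
  intro t ht
  rw [← gronwallBound_ε0]
  exact norm_le_gronwallBound_of_norm_deriv_le hC le_rfl hτ₀
    (fun s hs => ((hf s hs).sub (hg s hs)).continuousAt.continuousWithinAt)
    (fun s hs => (hf s (Ioo_subset_Icc_self hs)).sub (hg s (Ioo_subset_Icc_self hs))) le_rfl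
    (fun s _ => by simpa using hV s (f s) (g s)) t ht

theorem norm_sub_sub_fderiv_apply_le {G : Type*} [NormedAddCommGroup G] [NormedSpace ℝ G]
    {f : E → G} {y₀ y w : E} {δ ε : ℝ} (hf : ∀ z ∈ ball y₀ δ, DifferentiableAt ℝ f z)
    (hf' : ∀ z ∈ ball y₀ δ, ‖fderiv ℝ f z - fderiv ℝ f y₀‖ ≤ ε) (hy : y ∈ ball y₀ δ) :
    ‖f y - f y₀ - fderiv ℝ f y₀ w‖ ≤ ‖fderiv ℝ f y₀‖ * ‖y - y₀ - w‖ + ε * ‖y - y₀‖ := by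
  have hmvt : ‖f y - f y₀ - fderiv ℝ f y₀ (y - y₀)‖ ≤ ε * ‖y - y₀‖ :=
    (convex_ball y₀ δ).norm_image_sub_le_of_norm_hasFDerivWithin_le'
      (fun z hz => (hf z hz).hasFDerivAt.hasFDerivWithinAt) hf'
      (mem_ball_self (pos_of_mem_ball hy)) hy
  calc ‖f y - f y₀ - fderiv ℝ f y₀ w‖
        = ‖fderiv ℝ f y₀ (y - y₀ - w) + (f y - f y₀ - fderiv ℝ f y₀ (y - y₀))‖ := by
          rw [map_sub]; abel_nf
    _ ≤ _ := (norm_add_le _ _).trans (add_le_add ((fderiv ℝ f y₀).le_opNorm _) hmvt)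

theorem exists_hasDerivWithinAt_linear_ode [CompleteSpace E] {A : ℝ → E →L[ℝ] E}
    {C p q τ₀ : ℝ} (hτ₀ : τ₀ ∈ Icc p q) (hA : ContinuousOn A (Icc p q))
    (hAC : ∀ t ∈ Icc p q, ‖A t‖ ≤ C) (hlen : C * (q - p) < 1) (x₀ : E) :
    ∃ y : ℝ → E, y τ₀ = x₀ ∧ ∀ t ∈ Icc p q, HasDerivWithinAt y (A t (y t)) (Icc p q) t := by
  have hC : 0 ≤ C := (norm_nonneg _).trans (hAC τ₀ hτ₀)
  have hpq : 0 ≤ q - p := by linarith [hτ₀.1, hτ₀.2]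
  have hk : 0 < 1 - C * (q - p) := by linarith
  -- `R` solves `C * (‖x₀‖ + R) * (q - p) = R`, so solutions cannot leave `closedBall x₀ R`
  set R := C * (q - p) * ‖x₀‖ / (1 - C * (q - p))
  have hR : 0 ≤ R := by positivity
  have hRfix : C * (‖x₀‖ + R) * (q - p) = R := by
    simp only [R]
    field_simp
    ring
  have hpl : IsPicardLindelof (fun t y => A t y) (tmin := p) (tmax := q) ⟨τ₀, hτ₀⟩ x₀
      ⟨R, hR⟩ 0 ⟨C * (‖x₀‖ + R), by positivity⟩ ⟨C, hC⟩ :=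
    { lipschitzOnWith := fun t ht =>
        ((A t).lipschitz.weaken (show ‖A t‖₊ ≤ ⟨C, hC⟩ from hAC t ht)).lipschitzOnWith
      continuousOn := fun y _ =>
        (ContinuousLinearMap.apply ℝ E y).continuous.comp_continuousOn hA
      norm_le := fun t ht y hy =>
        calc ‖A t y‖ ≤ ‖A t‖ * ‖y‖ := (A t).le_opNorm y
          _ ≤ C * (‖x₀‖ + R) :=
            mul_le_mul (hAC t ht) (norm_le_of_mem_closedBall hy) (norm_nonneg _) hC
      mul_max_le := by
        show C * (‖x₀‖ + R) * max (q - τ₀) (τ₀ - p) ≤ R - 0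
        have hmax : max (q - τ₀) (τ₀ - p) ≤ q - p :=
          max_le (by linarith [hτ₀.1]) (by linarith [hτ₀.2])
        calc C * (‖x₀‖ + R) * max (q - τ₀) (τ₀ - p) ≤ C * (‖x₀‖ + R) * (q - p) :=
              mul_le_mul_of_nonneg_left hmax (by positivity)
          _ = R - 0 := by rw [hRfix, sub_zero] }
  exact hpl.exists_eq_forall_mem_Icc_hasDerivWithinAt₀

end Estimates

section Variational

variable {E : Type*} [NormedAddCommGroup E] [NormedSpace ℝ E] {V : ℝ × E → E} {C : ℝ}

theorem hasFDerivAt_flow_of_variational (hC : 0 < C)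
    (hVlip : ∀ t y₁ y₂, ‖V (t, y₁) - V (t, y₂)‖ ≤ C * ‖y₁ - y₂‖)
    (hVdiff : ∀ t, Differentiable ℝ fun y => V (t, y))
    (hDV : Continuous fun r : ℝ × E => fderiv ℝ (fun y => V (r.1, y)) r.2)
    {p q τ₀ : ℝ} (hτ₀ : τ₀ ∈ Ioo p q) {u : E → ℝ → E} (hu₀ : ∀ z, u z τ₀ = z)
    (hu : ∀ z, ∀ t ∈ Icc p q, HasDerivAt (u z) (V (t, u z t)) t) {x : E}
    {Y : ℝ → E →L[ℝ] E} (hY₀ : Y τ₀ = ContinuousLinearMap.id ℝ E)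
    (hYc : ContinuousOn Y (Icc p q))
    (hY : ∀ t ∈ Ioo p q, HasDerivAt Y ((fderiv ℝ (fun y => V (t, y)) (u x t)).comp (Y t)) t) :
    ∀ t ∈ Icc p q, HasFDerivAt (fun z => u z t) (Y t) x := by
  set L := exp (C * (q - p))
  have hL : 1 ≤ L := one_le_exp (by nlinarith [hτ₀.1, hτ₀.2])
  intro t ht
  rw [hasFDerivAt_iff_isLittleO_nhds_zero, Asymptotics.isLittleO_iff]
  intro ε hε
  set ε' := ε * C / L ^ 2
  obtain ⟨δ, hδ, hclose⟩ := hDV.exists_pos_forall_mem_Icc_forall_mem_ball_dist_lt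
    (γ := u x) (fun s hs => (hu x s hs).continuousAt.continuousWithinAt)
    (show 0 < ε' by positivity)
  filter_upwards [ball_mem_nhds (0 : E) (div_pos hδ (by positivity : (0 : ℝ) < L))] with h hh
  have hgap : ∀ s ∈ Icc p q, ‖u (x + h) s - u x s‖ ≤ ‖h‖ * L := fun s hs => by
    simpa [hu₀] using norm_sub_le_of_trajectories hC.le hVlip hτ₀ (hu (x + h)) (hu x) s hs
  have hgap_lt : ‖h‖ * L < δ := by
    rwa [mem_ball_zero_iff, lt_div_iff₀ (by positivity)] at hh
  -- the remainder `u (x + h) s - u x s - Y s h` solves the variational equation up to a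
  -- forcing term of size `ε' * (‖h‖ * L)`
  have hforcing : ∀ s ∈ Ioo p q, ‖V (s, u (x + h) s) - V (s, u x s)
      - fderiv ℝ (fun y => V (s, y)) (u x s) (Y s h)‖
      ≤ C * ‖u (x + h) s - u x s - Y s h‖ + ε' * (‖h‖ * L) := by
    intro s hs
    have hs' := Ioo_subset_Icc_self hs
    have hmem : u (x + h) s ∈ ball (u x s) δ :=
      mem_ball_iff_norm.2 ((hgap s hs').trans_lt hgap_lt)
    refine (norm_sub_sub_fderiv_apply_le (fun z _ => hVdiff s z)
      (fun z hz => by simpa [dist_eq_norm] using (hclose s hs' z hz).le) hmem).trans ?_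
    gcongr
    · exact norm_fderiv_le_of_lip' ℝ hC.le (.of_forall fun y => hVlip s y (u x s))
    · exact hgap s hs'
  have hremainder := norm_le_gronwallBound_of_norm_deriv_le (δ := 0)
    (f := fun s => u (x + h) s - u x s - Y s h) hC.le (by positivity) hτ₀
    (fun s hs => (((hu (x + h) s hs).sub (hu x s hs)).continuousAt.continuousWithinAt).sub
      ((ContinuousLinearMap.apply ℝ E h).continuous.continuousAt.comp_continuousWithinAt
        (hYc s hs)))
    (fun s hs => ((hu (x + h) s (Ioo_subset_Icc_self hs)).sub
      (hu x s (Ioo_subset_Icc_self hs))).sub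
      ((hY s hs).clm_apply (hasDerivAt_const s h) |>.congr_deriv (by simp)))
    (by simp [hu₀, hY₀]) hforcing t ht
  refine hremainder.trans ?_
  have hLpos : 0 < L := by positivity
  calc gronwallBound 0 C (ε' * (‖h‖ * L)) (q - p) = ε * ‖h‖ * ((L - 1) / L) := by
        simp only [gronwallBound_of_K_ne_0 hC.ne', zero_mul, zero_add, ε', L]
        field_simp
    _ ≤ ε * ‖h‖ := mul_le_of_le_one_right (by positivity)
        ((div_le_one hLpos).2 (by linarith))

theorem exists_hasFDerivAt_flow_hasDerivAt [CompleteSpace E] (hC : 0 < C)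
    (hVlip : ∀ t y₁ y₂, ‖V (t, y₁) - V (t, y₂)‖ ≤ C * ‖y₁ - y₂‖)
    (hVdiff : ∀ t, Differentiable ℝ fun y => V (t, y))
    (hDV : Continuous fun r : ℝ × E => fderiv ℝ (fun y => V (r.1, y)) r.2)
    {a b : ℝ} (hlen : b - a < 1 / C) {τ₀ τ : ℝ} (hτ₀ : τ₀ ∈ Ioo a b) (hτ : τ ∈ Ioo a b)
    {u : E → ℝ → E} (hu₀ : ∀ z, u z τ₀ = z)
    (hu : ∀ z, ∀ t ∈ Ioo a b, HasDerivAt (u z) (V (t, u z t)) t) (x : E) :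
    ∃ Y : ℝ → E →L[ℝ] E, (∀ᶠ s in 𝓝 τ, HasFDerivAt (fun z => u z s) (Y s) x) ∧
      HasDerivAt Y ((fderiv ℝ (fun y => V (τ, y)) (u x τ)).comp (Y τ)) τ := by
  obtain ⟨p, q, hap, hpτ₀, hpτ, hτ₀q, hτq, hqb⟩ :
      ∃ p q, a < p ∧ p < τ₀ ∧ p < τ ∧ τ₀ < q ∧ τ < q ∧ q < b := by
    have hmin := lt_min hτ₀.1 hτ.1
    have hmax := max_lt hτ₀.2 hτ.2
    refine ⟨(a + min τ₀ τ) / 2, (max τ₀ τ + b) / 2, ?_, ?_, ?_, ?_, ?_, ?_⟩ <;>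
      linarith [min_le_left τ₀ τ, min_le_right τ₀ τ, le_max_left τ₀ τ, le_max_right τ₀ τ]
  have hIcc : Icc p q ⊆ Ioo a b := Icc_subset_Ioo hap hqb
  set A := fun t => fderiv ℝ (fun y => V (t, y)) (u x t)
  have hA : ContinuousOn A (Icc p q) := hDV.comp_continuousOn
    (continuousOn_id.prodMk fun t ht => (hu x t (hIcc ht)).continuousAt.continuousWithinAt)
  -- `Y ↦ A t ∘ Y` is the linear operator `compL (A t)` on `E →L[ℝ] E`
  have hAC : ∀ t ∈ Icc p q, ‖ContinuousLinearMap.compL ℝ E E E (A t)‖ ≤ C := fun t _ =>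
    calc _ ≤ ‖ContinuousLinearMap.compL ℝ E E E‖ * ‖A t‖ := ContinuousLinearMap.le_opNorm _ _
      _ ≤ 1 * C := mul_le_mul (ContinuousLinearMap.norm_compL_le ℝ E E E)
          (norm_fderiv_le_of_lip' ℝ hC.le (.of_forall fun y => hVlip t y (u x t)))
          (norm_nonneg _) zero_le_one
      _ = C := one_mul C
  have hlen' : C * (q - p) < 1 := by
    rw [lt_div_iff₀ hC] at hlen
    nlinarith
  obtain ⟨Y, hY₀, hY⟩ := exists_hasDerivWithinAt_linear_ode ⟨hpτ₀.le, hτ₀q.le⟩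
    ((ContinuousLinearMap.compL ℝ E E E).continuous.comp_continuousOn hA) hAC hlen'
    (ContinuousLinearMap.id ℝ E)
  have hYint : ∀ t ∈ Ioo p q, HasDerivAt Y ((A t).comp (Y t)) t := fun t ht =>
    (hY t (Ioo_subset_Icc_self ht)).hasDerivAt (Icc_mem_nhds ht.1 ht.2)
  refine ⟨Y, ?_, hYint τ ⟨hpτ, hτq⟩⟩
  filter_upwards [Ioo_mem_nhds hpτ hτq] with s hs
  exact hasFDerivAt_flow_of_variational hC hVlip hVdiff hDV ⟨hpτ₀, hτ₀q⟩ hu₀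
    (fun z t ht => hu z t (hIcc ht)) hY₀ (fun t ht => (hY t ht).continuousWithinAt) hYint s
    (Ioo_subset_Icc_self hs)

end Variational

theorem stmt_7_general {n : ℕ}
    (V : ℝ × EuclideanSpace ℝ (Fin n) → EuclideanSpace ℝ (Fin n))
    (C : ℝ) (hC : 0 < C)
    (hVlip : ∀ (τ : ℝ) (y₁ y₂ : EuclideanSpace ℝ (Fin n)),
      ‖V (τ, y₁) - V (τ, y₂)‖ ≤ C * ‖y₁ - y₂‖)
    (hVdiff : ∀ τ : ℝ, Differentiable ℝ (fun y => V (τ, y)))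
    (hDVcont : Continuous (fun p : ℝ × EuclideanSpace ℝ (Fin n) =>
      fderiv ℝ (fun y => V (p.1, y)) p.2))
    (a b : ℝ) (hlen : b - a < 1 / C)
    (θ : ℝ → ℝ → EuclideanSpace ℝ (Fin n) → EuclideanSpace ℝ (Fin n))
    (hθ : IsLocalFlowMap V (Set.Ioo a b) θ)
    (τ₀ : ℝ) (hτ₀ : τ₀ ∈ Set.Ioo a b) (x : EuclideanSpace ℝ (Fin n)) :
    (∀ τ ∈ Set.Ioo a b, DifferentiableAt ℝ (fun z => θ τ τ₀ z) x) ∧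
    fderiv ℝ (fun z => θ τ₀ τ₀ z) x = ContinuousLinearMap.id ℝ (EuclideanSpace ℝ (Fin n)) ∧
    ∀ τ ∈ Set.Ioo a b,
      HasDerivAt (fun s => fderiv ℝ (fun z => θ s τ₀ z) x)
        ((fderiv ℝ (fun y => V (τ, y)) (θ τ τ₀ x)).comp
          (fderiv ℝ (fun z => θ τ τ₀ z) x)) τ := by
  have hflow : ∀ τ ∈ Ioo a b, ∃ Y : ℝ → _,
      (∀ᶠ s in 𝓝 τ, HasFDerivAt (fun z => θ s τ₀ z) (Y s) x) ∧
      HasDerivAt Y ((fderiv ℝ (fun y => V (τ, y)) (θ τ τ₀ x)).comp (Y τ)) τ := fun τ hτ =>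
    exists_hasFDerivAt_flow_hasDerivAt hC hVlip hVdiff hDVcont hlen hτ₀ hτ
      (u := fun z s => θ s τ₀ z) (fun z => (hθ τ₀ hτ₀ z).1) (fun z => (hθ τ₀ hτ₀ z).2) x
  refine ⟨fun τ hτ => ?_, ?_, fun τ hτ => ?_⟩
  · obtain ⟨Y, hYx, -⟩ := hflow τ hτ
    exact hYx.self_of_nhds.differentiableAt
  · have hid : (fun z => θ τ₀ τ₀ z) = id := funext fun z => (hθ τ₀ hτ₀ z).1
    rw [hid, fderiv_id]
  · obtain ⟨Y, hYx, hY⟩ := hflow τ hτ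
    have hYeq : ∀ᶠ s in 𝓝 τ, fderiv ℝ (fun z => θ s τ₀ z) x = Y s :=
      hYx.mono fun s hs => hs.fderiv
    rw [hYeq.self_of_nhds]
    exact hY.congr_of_eventuallyEq hYeq

/-- **The linear variational equation.**
Let `V : ℝ × ℝⁿ → ℝⁿ` be continuous and bounded, uniformly Lipschitz in the second variable
with constant `C > 0`, such that `y ↦ V (τ, y)` is Fréchet differentiable for each `τ` and
`(τ, y) ↦ D_y V (τ, y)` is continuous. Let `I₀ = Ioo a b` be an open interval of length less
than `1/C`, let `θ` be a local flow map for `V` on `I₀`, fix `τ₀ ∈ I₀` and `x`, and set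
`Y τ := D_x θ (τ, τ₀, x)`. Then `Y` exists, `Y τ₀ = id`, `τ ↦ Y τ` is differentiable on
`I₀`, and `Y' τ = D_y V (τ, θ τ τ₀ x) ∘ Y τ` for all `τ ∈ I₀`. -/
theorem stmt_7 {n : ℕ} (hn : 1 ≤ n)
    (V : ℝ × EuclideanSpace ℝ (Fin n) → EuclideanSpace ℝ (Fin n))
    (C : ℝ) (hC : 0 < C)
    (hVcont : Continuous V)
    (hVbdd : ∃ M : ℝ, ∀ p, ‖V p‖ ≤ M)
    (hVlip : ∀ (τ : ℝ) (y₁ y₂ : EuclideanSpace ℝ (Fin n)),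
      ‖V (τ, y₁) - V (τ, y₂)‖ ≤ C * ‖y₁ - y₂‖)
    (hVdiff : ∀ τ : ℝ, Differentiable ℝ (fun y => V (τ, y)))
    (hDVcont : Continuous (fun p : ℝ × EuclideanSpace ℝ (Fin n) =>
      fderiv ℝ (fun y => V (p.1, y)) p.2))
    (a b : ℝ) (hab : a < b) (hlen : b - a < 1 / C)
    (θ : ℝ → ℝ → EuclideanSpace ℝ (Fin n) → EuclideanSpace ℝ (Fin n))
    (hθ : IsLocalFlowMap V (Set.Ioo a b) θ)
    (τ₀ : ℝ) (hτ₀ : τ₀ ∈ Set.Ioo a b) (x : EuclideanSpace ℝ (Fin n)) :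
    (∀ τ ∈ Set.Ioo a b, DifferentiableAt ℝ (fun z => θ τ τ₀ z) x) ∧
    fderiv ℝ (fun z => θ τ₀ τ₀ z) x = ContinuousLinearMap.id ℝ (EuclideanSpace ℝ (Fin n)) ∧
    ∀ τ ∈ Set.Ioo a b,
      HasDerivAt (fun s => fderiv ℝ (fun z => θ s τ₀ z) x)
        ((fderiv ℝ (fun y => V (τ, y)) (θ τ τ₀ x)).comp
          (fderiv ℝ (fun z => θ τ τ₀ z) x)) τ :=
  stmt_7_general V C hC hVlip hVdiff hDVcont a b hlen θ hθ τ₀ hτ₀ x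
end

section
/- Assume in addition that for every τ ∈ ℝ the map y ↦ V(τ, y) is Fréchet differentiable and that the map (τ, y) ↦ D_yV(τ, y) is continuous on ℝ × ℝⁿ. Let θ be a local flow map for V on I₀. Then for every (τ, τ₀, x) ∈ I₀ × I₀ × ℝⁿ the partial derivative of θ with respect to its second argument exists and is given by ∂θ/∂τ₀(τ, τ₀, x) = −(D_x θ(τ, τ₀, x))(V(τ₀, x)), where D_x θ(τ, τ₀, x) is the Fréchet derivative of θ with respect to its third argument. -/
open Set Filter Topology

section Gronwall

variable {E : Type*} [NormedAddCommGroup E] [NormedSpace ℝ E]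

theorem gronwallBound_le_mul_exp {δ K ε x : ℝ} (hK : 0 ≤ K) (hε : 0 ≤ ε) :
    gronwallBound δ K ε x ≤ (δ + ε * x) * Real.exp (K * x) := by
  rcases hK.eq_or_lt with rfl | hK
  · simp [gronwallBound_K0]
  rw [gronwallBound_of_K_ne_0 hK.ne']
  have hexp : Real.exp (K * x) - 1 ≤ K * x * Real.exp (K * x) := by
    have h := mul_le_mul_of_nonneg_right (Real.one_sub_le_exp_neg (K * x)) (Real.exp_pos (K * x)).le
    rw [← Real.exp_add, neg_add_cancel, Real.exp_zero] at h
    linarith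
  calc δ * Real.exp (K * x) + ε / K * (Real.exp (K * x) - 1)
      ≤ δ * Real.exp (K * x) + ε / K * (K * x * Real.exp (K * x)) := by gcongr
    _ = (δ + ε * x) * Real.exp (K * x) := by field_simp

theorem norm_le_gronwallBound_of_norm_deriv_le_uIcc {f f' : ℝ → E} {δ K ε t₀ t : ℝ}
    (hf : ∀ u ∈ uIcc t₀ t, HasDerivAt f (f' u) u)
    (bound : ∀ u ∈ uIcc t₀ t, ‖f' u‖ ≤ K * ‖f u‖ + ε) (h₀ : ‖f t₀‖ ≤ δ) :
    ‖f t‖ ≤ gronwallBound δ K ε |t - t₀| := by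
  have forward : ∀ (g g' : ℝ → E) (s₀ s : ℝ), s₀ ≤ s →
      (∀ u ∈ Icc s₀ s, HasDerivAt g (g' u) u) → (∀ u ∈ Icc s₀ s, ‖g' u‖ ≤ K * ‖g u‖ + ε) →
      ‖g s₀‖ ≤ δ → ‖g s‖ ≤ gronwallBound δ K ε |s - s₀| := by
    intro g g' s₀ s hs hg hb hg₀
    rw [abs_of_nonneg (sub_nonneg.2 hs)]
    exact norm_le_gronwallBound_of_norm_deriv_right_le
      (fun u hu => (hg u hu).continuousAt.continuousWithinAt)
      (fun u hu => (hg u (Ico_subset_Icc_self hu)).hasDerivWithinAt) hg₀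
      (fun u hu => hb u (Ico_subset_Icc_self hu)) s ⟨hs, le_rfl⟩
  rcases le_total t₀ t with h | h
  · rw [uIcc_of_le h] at hf bound
    exact forward f f' t₀ t h hf bound h₀
  rw [uIcc_of_ge h] at hf bound
  have hmem : ∀ u ∈ Icc (-t₀) (-t), -u ∈ Icc t t₀ := fun u hu =>
    ⟨le_neg_of_le_neg hu.2, neg_le_of_neg_le hu.1⟩
  have := forward (fun u => f (-u)) (fun u => -f' (-u)) (-t₀) (-t) (neg_le_neg h)
    (fun u hu => by
      simpa [Function.comp_def] using (hf (-u) (hmem u hu)).scomp u (hasDerivAt_neg u))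
    (fun u hu => by simpa using bound (-u) (hmem u hu)) (by simpa using h₀)
  rwa [neg_neg, neg_sub_neg, abs_sub_comm] at this

theorem norm_sub_le_of_norm_deriv_le_uIcc {f f' : ℝ → E} {B a b : ℝ}
    (hf : ∀ t ∈ uIcc a b, HasDerivAt f (f' t) t) (bound : ∀ t ∈ uIcc a b, ‖f' t‖ ≤ B) :
    ‖f b - f a‖ ≤ B * |b - a| :=
  (convex_uIcc a b).norm_image_sub_le_of_norm_hasDerivWithin_le
    (fun t ht => (hf t ht).hasDerivWithinAt) bound left_mem_uIcc right_mem_uIcc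

end Gronwall

section Trajectories

variable {E : Type*} [NormedAddCommGroup E] [NormedSpace ℝ E]

theorem norm_sub_le_of_trajectories_ODE_uIcc {V : ℝ × E → E} {C : ℝ}
    (hV : ∀ t y₁ y₂, ‖V (t, y₁) - V (t, y₂)‖ ≤ C * ‖y₁ - y₂‖) {γ₁ γ₂ : ℝ → E} {t₀ t : ℝ}
    (hγ₁ : ∀ u ∈ uIcc t₀ t, HasDerivAt γ₁ (V (u, γ₁ u)) u)
    (hγ₂ : ∀ u ∈ uIcc t₀ t, HasDerivAt γ₂ (V (u, γ₂ u)) u) :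
    ‖γ₁ t - γ₂ t‖ ≤ ‖γ₁ t₀ - γ₂ t₀‖ * Real.exp (C * |t - t₀|) := by
  simpa [gronwallBound_ε0] using norm_le_gronwallBound_of_norm_deriv_le_uIcc (ε := 0)
    (f := γ₁ - γ₂) (fun u hu => (hγ₁ u hu).sub (hγ₂ u hu))
    (fun u _ => by simpa using hV u (γ₁ u) (γ₂ u)) le_rfl

theorem norm_sub_sub_le_of_variational {V : ℝ × E → E} {A W : ℝ → E →L[ℝ] E} {C ρ t₀ t : ℝ}
    {γ₁ γ₂ : ℝ → E} (hA : ∀ u ∈ uIcc t₀ t, ‖A u‖ ≤ C)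
    (hγ₁ : ∀ u ∈ uIcc t₀ t, HasDerivAt γ₁ (V (u, γ₁ u)) u)
    (hγ₂ : ∀ u ∈ uIcc t₀ t, HasDerivAt γ₂ (V (u, γ₂ u)) u)
    (hW₀ : W t₀ = ContinuousLinearMap.id ℝ E)
    (hW : ∀ u ∈ uIcc t₀ t, HasDerivAt W ((A u).comp (W u)) u)
    (hrem : ∀ u ∈ uIcc t₀ t, ‖V (u, γ₁ u) - V (u, γ₂ u) - A u (γ₁ u - γ₂ u)‖ ≤ ρ) :
    ‖γ₁ t - γ₂ t - W t (γ₁ t₀ - γ₂ t₀)‖ ≤ gronwallBound 0 C ρ |t - t₀| := by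
  set h := γ₁ t₀ - γ₂ t₀
  set z : ℝ → E := fun u => γ₁ u - γ₂ u - W u h
  have hz : ∀ u ∈ uIcc t₀ t,
      HasDerivAt z (V (u, γ₁ u) - V (u, γ₂ u) - A u (W u h)) u := fun u hu =>
    ((hγ₁ u hu).sub (hγ₂ u hu)).sub ((hW u hu).clm_apply (hasDerivAt_const u h)) |>.congr_deriv
      (by simp)
  refine norm_le_gronwallBound_of_norm_deriv_le_uIcc (f := z) hz (fun u hu => ?_)
    (by simp [z, h, hW₀])
  have hsplit : V (u, γ₁ u) - V (u, γ₂ u) - A u (W u h)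
      = (V (u, γ₁ u) - V (u, γ₂ u) - A u (γ₁ u - γ₂ u)) + A u (z u) := by
    simp only [z, map_sub]; abel
  rw [hsplit]
  calc _ ≤ ‖V (u, γ₁ u) - V (u, γ₂ u) - A u (γ₁ u - γ₂ u)‖ + ‖A u (z u)‖ := norm_add_le _ _
    _ ≤ ρ + C * ‖z u‖ :=
      add_le_add (hrem u hu) (((A u).le_opNorm _).trans (by gcongr; exact hA u hu))
    _ = C * ‖z u‖ + ρ := add_comm _ _

end Trajectories

section InitialValue

variable {E : Type*} [NormedAddCommGroup E] [NormedSpace ℝ E]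

theorem IsCompact.exists_forall_norm_sub_sub_fderiv_le {T : Type*} [PseudoMetricSpace T]
    {V : T × E → E} (hVdiff : ∀ t, Differentiable ℝ fun y => V (t, y))
    {K : Set (T × E)} (hK : IsCompact K)
    (hDV : ∀ p ∈ K, ContinuousAt (fun q : T × E => fderiv ℝ (fun y => V (q.1, y)) q.2) p)
    {ε : ℝ} (hε : 0 < ε) :
    ∃ δ > 0, ∀ t y, (t, y) ∈ K → ∀ w, ‖w - y‖ < δ →
      ‖V (t, w) - V (t, y) - fderiv ℝ (fun y => V (t, y)) y (w - y)‖ ≤ ε * ‖w - y‖ := by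
  obtain ⟨δ, hδ, hclose⟩ := Metric.mem_uniformity_dist.1
    (hK.uniformContinuousAt_of_continuousAt _ hDV (Metric.dist_mem_uniformity hε))
  refine ⟨δ, hδ, fun t y hty w hw => ?_⟩
  refine (convex_segment y w).norm_image_sub_le_of_norm_fderiv_le' (fun v _ => hVdiff t v)
    (fun v hv => ?_) (left_mem_segment ℝ y w) (right_mem_segment ℝ y w)
  have hvy : dist y v ≤ dist y w := by
    linarith [dist_add_dist_of_mem_segment hv, dist_nonneg (x := v) (y := w)]
  have hdist : dist (t, y) (t, v) < δ := by
    rw [Prod.dist_eq, dist_self, max_eq_right dist_nonneg]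
    exact hvy.trans_lt (by rwa [dist_comm, dist_eq_norm])
  rw [← dist_eq_norm, dist_comm]
  exact (hclose hdist hty).le

theorem hasFDerivAt_of_hasDerivAt_variational {V : ℝ × E → E} {C : ℝ} (hC : 0 ≤ C)
    (hVlip : ∀ t y₁ y₂, ‖V (t, y₁) - V (t, y₂)‖ ≤ C * ‖y₁ - y₂‖)
    (hVdiff : ∀ t, Differentiable ℝ fun y => V (t, y))
    (hDV : Continuous fun p : ℝ × E => fderiv ℝ (fun y => V (p.1, y)) p.2)
    {φ : ℝ → E → E} {τ₀ τ : ℝ} (hφ₀ : ∀ y, φ τ₀ y = y)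
    (hφ : ∀ y, ∀ t ∈ uIcc τ₀ τ, HasDerivAt (φ · y) (V (t, φ t y)) t)
    {x : E} {W : ℝ → E →L[ℝ] E} (hW₀ : W τ₀ = ContinuousLinearMap.id ℝ E)
    (hW : ∀ t ∈ uIcc τ₀ τ,
      HasDerivAt W ((fderiv ℝ (fun y => V (t, y)) (φ t x)).comp (W t)) t) :
    HasFDerivAt (φ τ) (W τ) x := by
  set L := |τ - τ₀|
  set e := Real.exp (C * L)
  have hlip : ∀ y, ∀ t ∈ uIcc τ₀ τ, ‖φ t y - φ t x‖ ≤ e * ‖y - x‖ := by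
    intro y t ht
    have hsub := uIcc_subset_uIcc_left ht
    have h := norm_sub_le_of_trajectories_ODE_uIcc hVlip (fun u hu => hφ y u (hsub hu))
      (fun u hu => hφ x u (hsub hu))
    rw [hφ₀, hφ₀, mul_comm] at h
    exact h.trans <| mul_le_mul_of_nonneg_right
      (Real.exp_le_exp.2 (by gcongr; exact abs_sub_left_of_mem_uIcc ht)) (norm_nonneg _)
  have hK : IsCompact ((fun t => (t, φ t x)) '' uIcc τ₀ τ) :=
    isCompact_uIcc.image_of_continuousOn
      (continuousOn_id.prodMk fun t ht => (hφ x t ht).continuousAt.continuousWithinAt)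
  rw [hasFDerivAt_iff_isLittleO, Asymptotics.isLittleO_iff]
  intro c hc
  set B := L * e * e + 1
  have hB : 0 < B := by positivity
  obtain ⟨δ, hδ, hlin⟩ := hK.exists_forall_norm_sub_sub_fderiv_le hVdiff
    (fun p _ => hDV.continuousAt) (div_pos hc hB)
  filter_upwards [Metric.ball_mem_nhds x (div_pos hδ (Real.exp_pos (C * L)))] with y hy
  rw [Metric.mem_ball, dist_eq_norm, lt_div_iff₀ (Real.exp_pos _), mul_comm] at hy
  have hz := norm_sub_sub_le_of_variational (ρ := c / B * (e * ‖y - x‖))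
    (fun t _ => norm_fderiv_le_of_lip' ℝ hC (Eventually.of_forall fun y => hVlip t y _))
    (hφ y) (hφ x) hW₀ hW fun t ht =>
      (hlin t _ (mem_image_of_mem _ ht) _ ((hlip y t ht).trans_lt hy)).trans
        (by gcongr; exact hlip y t ht)
  rw [hφ₀, hφ₀] at hz
  calc ‖φ τ y - φ τ x - W τ (y - x)‖
      ≤ (0 + c / B * (e * ‖y - x‖) * L) * e :=
        hz.trans (gronwallBound_le_mul_exp hC (by positivity))
    _ = c * ‖y - x‖ * ((L * e * e) / B) := by field_simp; ring
    _ ≤ c * ‖y - x‖ := mul_le_of_le_one_right (by positivity) ((div_le_one hB).2 (by linarith))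

end InitialValue

section StartTime

variable {E : Type*} [NormedAddCommGroup E] [NormedSpace ℝ E]

theorem hasDerivAt_startTime_of_trajectories {V : ℝ × E → E} {M : ℝ} (hM : ∀ p, ‖V p‖ ≤ M)
    {τ₀ : ℝ} {x : E} (hV : ContinuousAt V (τ₀, x)) {φ : ℝ → ℝ → E}
    (hφ : ∀ᶠ s in 𝓝 τ₀, φ s s = x ∧ ∀ t ∈ uIcc s τ₀, HasDerivAt (φ · s) (V (t, φ t s)) t) :
    HasDerivAt (fun s => φ τ₀ s) (-V (τ₀, x)) τ₀ := by
  have hM0 : 0 ≤ M := (norm_nonneg _).trans (hM (τ₀, x))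
  have hM1 : 0 < M + 1 := by linarith
  rw [hasDerivAt_iff_isLittleO, Asymptotics.isLittleO_iff]
  intro c hc
  obtain ⟨δ, hδ, hVδ⟩ := Metric.continuousAt_iff.1 hV c hc
  filter_upwards [hφ, Metric.ball_mem_nhds τ₀ (div_pos hδ hM1)] with s ⟨hss, hs⟩ hsτ₀
  rw [Metric.mem_ball, Real.dist_eq, lt_div_iff₀ hM1] at hsτ₀
  have hnear : ∀ t ∈ uIcc s τ₀, ‖V (t, φ t s) - V (τ₀, x)‖ ≤ c := by
    intro t ht
    have hts : |t - s| ≤ |s - τ₀| := abs_sub_comm τ₀ s ▸ abs_sub_left_of_mem_uIcc ht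
    have hspeed : ‖φ t s - x‖ ≤ M * |t - s| := by
      simpa [hss] using norm_sub_le_of_norm_deriv_le_uIcc
        (fun u hu => hs u (uIcc_subset_uIcc_left ht hu)) (fun u _ => hM _)
    rw [← dist_eq_norm]
    refine (hVδ ?_).le
    rw [Prod.dist_eq, max_lt_iff, Real.dist_eq, dist_eq_norm]
    have htτ₀ := abs_sub_left_of_mem_uIcc (uIcc_comm s τ₀ ▸ ht)
    have hMt := mul_le_mul_of_nonneg_left hts hM0
    constructor <;> dsimp only <;> nlinarith [abs_nonneg (s - τ₀)]
  have h := norm_sub_le_of_norm_deriv_le_uIcc (f := fun t => φ t s - (t - s) • V (τ₀, x))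
    (fun t ht => (hs t ht).sub (((hasDerivAt_id t).sub_const s).smul_const _) |>.congr_deriv
      (by simp)) hnear
  rw [hφ.self_of_nhds.1, Real.norm_eq_abs, abs_sub_comm s τ₀]
  convert h using 2
  rw [hss]
  module

end StartTime

section LinearODE

variable {F : Type*} [NormedAddCommGroup F] [NormedSpace ℝ F] [CompleteSpace F]

theorem exists_forall_mem_Icc_hasDerivWithinAt_clm_apply {A : ℝ → F →L[ℝ] F} {C a b t₀ : ℝ}
    (hA : ContinuousOn A (Icc a b)) (hAC : ∀ t ∈ Icc a b, ‖A t‖ ≤ C) (hCab : C * (b - a) < 1)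
    (ht₀ : t₀ ∈ Icc a b) (u₀ : F) :
    ∃ u : ℝ → F, u t₀ = u₀ ∧ ∀ t ∈ Icc a b, HasDerivWithinAt u (A t (u t)) (Icc a b) t := by
  have hC : 0 ≤ C := (norm_nonneg _).trans (hAC t₀ ht₀)
  have hm : 0 ≤ b - a := by linarith [ht₀.1, ht₀.2]
  -- on `closedBall u₀ r` the field is bounded by `C * (‖u₀‖ + r)`, and `r` solves
  -- `C * (‖u₀‖ + r) * (b - a) = r`
  set r := C * (b - a) * ‖u₀‖ / (1 - C * (b - a))
  have hr : 0 ≤ r := div_nonneg (by positivity) (by linarith)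
  have hr_eq : r * (1 - C * (b - a)) = C * (b - a) * ‖u₀‖ := div_mul_cancel₀ _ (by linarith)
  have hL : 0 ≤ C * (‖u₀‖ + r) := by positivity
  have hPL : IsPicardLindelof (fun t u => A t u) (tmin := a) (tmax := b) ⟨t₀, ht₀⟩ u₀
      r.toNNReal 0 (C * (‖u₀‖ + r)).toNNReal C.toNNReal := by
    refine ⟨fun t ht => ?_, fun u _ => hA.clm_apply continuousOn_const, fun t ht u hu => ?_, ?_⟩
    · refine LipschitzOnWith.of_dist_le' fun u _ v _ => ?_
      rw [dist_eq_norm, dist_eq_norm, ← map_sub]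
      exact ((A t).le_opNorm _).trans (by gcongr; exact hAC t ht)
    · rw [Metric.mem_closedBall, dist_eq_norm, Real.coe_toNNReal _ hr] at hu
      rw [Real.coe_toNNReal _ hL]
      calc ‖A t u‖ ≤ C * ‖u‖ := ((A t).le_opNorm u).trans (by gcongr; exact hAC t ht)
        _ ≤ C * (‖u₀‖ + r) := by gcongr; linarith [norm_le_norm_add_norm_sub' u u₀]
    · rw [NNReal.coe_zero, sub_zero, Real.coe_toNNReal _ hL, Real.coe_toNNReal _ hr]
      calc C * (‖u₀‖ + r) * max (b - t₀) (t₀ - a) ≤ C * (‖u₀‖ + r) * (b - a) := by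
            gcongr; exact max_le (by linarith [ht₀.1]) (by linarith [ht₀.2])
        _ = r := by linear_combination (-1 : ℝ) * hr_eq
  exact hPL.exists_eq_forall_mem_Icc_hasDerivWithinAt₀

variable {E : Type*} [NormedAddCommGroup E] [NormedSpace ℝ E] [CompleteSpace E]

theorem exists_forall_mem_uIcc_hasDerivAt_comp {A : ℝ → E →L[ℝ] E} {C a b t₀ t₁ : ℝ}
    (hA : ContinuousOn A (Ioo a b)) (hAC : ∀ t ∈ Ioo a b, ‖A t‖ ≤ C) (hCab : C * (b - a) < 1)
    (ht₀ : t₀ ∈ Ioo a b) (ht₁ : t₁ ∈ Ioo a b) :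
    ∃ W : ℝ → E →L[ℝ] E, W t₀ = ContinuousLinearMap.id ℝ E ∧
      ∀ t ∈ uIcc t₀ t₁, HasDerivAt W ((A t).comp (W t)) t := by
  obtain ⟨α, haα, hα⟩ := exists_between (lt_min ht₀.1 ht₁.1)
  obtain ⟨β, hβ, hβb⟩ := exists_between (max_lt ht₀.2 ht₁.2)
  have hαβ : Icc α β ⊆ Ioo a b := Icc_subset_Ioo haα hβb
  have hJ : uIcc t₀ t₁ ⊆ Ioo α β := ordConnected_Ioo.uIcc_subset
    ⟨hα.trans_le (min_le_left _ _), (le_max_left _ _).trans_lt hβ⟩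
    ⟨hα.trans_le (min_le_right _ _), (le_max_right _ _).trans_lt hβ⟩
  have hCαβ : C * (β - α) < 1 :=
    lt_of_le_of_lt (by gcongr; exact (norm_nonneg _).trans (hAC t₀ ht₀)) hCab
  set L := ContinuousLinearMap.compL ℝ E E E
  obtain ⟨W, hW₀, hW⟩ := exists_forall_mem_Icc_hasDerivWithinAt_clm_apply (A := fun t => L (A t))
    (L.continuous.comp_continuousOn (hA.mono hαβ))
    (fun t ht => (L.le_opNorm (A t)).trans <| (mul_le_of_le_one_left (norm_nonneg _)
      (ContinuousLinearMap.norm_compL_le ℝ E E E)).trans (hAC t (hαβ ht)))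
    hCαβ (Ioo_subset_Icc_self (hJ left_mem_uIcc)) (ContinuousLinearMap.id ℝ E)
  exact ⟨W, hW₀, fun t ht =>
    (hW t (Ioo_subset_Icc_self (hJ ht))).hasDerivAt (Icc_mem_nhds (hJ ht).1 (hJ ht).2)⟩

end LinearODE

theorem IsLocalFlowMap.apply_eq_apply_apply {n : ℕ}
    {V : ℝ × EuclideanSpace ℝ (Fin n) → EuclideanSpace ℝ (Fin n)} {C : ℝ}
    (hVlip : ∀ (τ : ℝ) (y₁ y₂ : EuclideanSpace ℝ (Fin n)),
      ‖V (τ, y₁) - V (τ, y₂)‖ ≤ C * ‖y₁ - y₂‖)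
    {a b : ℝ} {θ : ℝ → ℝ → EuclideanSpace ℝ (Fin n) → EuclideanSpace ℝ (Fin n)}
    (hθ : IsLocalFlowMap V (Ioo a b) θ) {r s t : ℝ} (hr : r ∈ Ioo a b) (hs : s ∈ Ioo a b)
    (ht : t ∈ Ioo a b) (x : EuclideanSpace ℝ (Fin n)) :
    θ t s x = θ t r (θ r s x) :=
  ODE_solution_unique_of_mem_Ioo (v := fun t y => V (t, y)) (s := fun _ => univ)
    (fun t _ => LipschitzOnWith.of_dist_le' fun y₁ _ y₂ _ => by
      simpa only [dist_eq_norm] using hVlip t y₁ y₂)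
    hr (fun u hu => ⟨(hθ s hs x).2 u hu, trivial⟩)
    (fun u hu => ⟨(hθ r hr _).2 u hu, trivial⟩) (hθ r hr _).1.symm ht

theorem stmt_8_general {n : ℕ}
    (V : ℝ × EuclideanSpace ℝ (Fin n) → EuclideanSpace ℝ (Fin n))
    (C : ℝ) (hC : 0 < C)
    (hVcont : Continuous V)
    (hVbdd : ∃ M : ℝ, ∀ p, ‖V p‖ ≤ M)
    (hVlip : ∀ (τ : ℝ) (y₁ y₂ : EuclideanSpace ℝ (Fin n)),
      ‖V (τ, y₁) - V (τ, y₂)‖ ≤ C * ‖y₁ - y₂‖)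
    (hVdiff : ∀ τ : ℝ, Differentiable ℝ (fun y => V (τ, y)))
    (hDVcont : Continuous (fun p : ℝ × EuclideanSpace ℝ (Fin n) =>
      fderiv ℝ (fun y => V (p.1, y)) p.2))
    (a b : ℝ) (hlen : b - a < 1 / C)
    (θ : ℝ → ℝ → EuclideanSpace ℝ (Fin n) → EuclideanSpace ℝ (Fin n))
    (hθ : IsLocalFlowMap V (Set.Ioo a b) θ) :
    ∀ τ ∈ Set.Ioo a b, ∀ τ₀ ∈ Set.Ioo a b, ∀ x : EuclideanSpace ℝ (Fin n),
      DifferentiableAt ℝ (fun z => θ τ τ₀ z) x ∧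
      HasDerivAt (fun s => θ τ s x)
        (-(fderiv ℝ (fun z => θ τ τ₀ z) x (V (τ₀, x)))) τ₀ := by
  intro τ hτ τ₀ hτ₀ x
  obtain ⟨M, hM⟩ := hVbdd
  have hsub {s t : ℝ} (hs : s ∈ Ioo a b) (ht : t ∈ Ioo a b) : uIcc s t ⊆ Ioo a b :=
    ordConnected_Ioo.uIcc_subset hs ht
  obtain ⟨W, hW₀, hW⟩ := exists_forall_mem_uIcc_hasDerivAt_comp
    (A := fun t => fderiv ℝ (fun y => V (t, y)) (θ t τ₀ x))
    (hDVcont.comp_continuousOn <| continuousOn_id.prodMk fun t ht =>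
      ((hθ τ₀ hτ₀ x).2 t ht).continuousAt.continuousWithinAt)
    (fun t _ => norm_fderiv_le_of_lip' ℝ hC.le (Eventually.of_forall fun y => hVlip t y _))
    (by rwa [lt_div_iff₀ hC, mul_comm] at hlen) hτ₀ hτ
  have hD : HasFDerivAt (θ τ τ₀) (W τ) x :=
    hasFDerivAt_of_hasDerivAt_variational (φ := fun t y => θ t τ₀ y) hC.le hVlip hVdiff hDVcont
      (fun y => (hθ τ₀ hτ₀ y).1)
      (fun y t ht => (hθ τ₀ hτ₀ y).2 t (hsub hτ₀ hτ ht)) hW₀ hW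
  have hstart : HasDerivAt (fun s => θ τ₀ s x) (-V (τ₀, x)) τ₀ :=
    hasDerivAt_startTime_of_trajectories hM hVcont.continuousAt <| by
      filter_upwards [Ioo_mem_nhds hτ₀.1 hτ₀.2] with s hs
      exact ⟨(hθ s hs x).1, fun t ht => (hθ s hs x).2 t (hsub hs hτ₀ ht)⟩
  have hcocycle : (fun s => θ τ s x) =ᶠ[𝓝 τ₀] fun s => θ τ τ₀ (θ τ₀ s x) := by
    filter_upwards [Ioo_mem_nhds hτ₀.1 hτ₀.2] with s hs
    exact hθ.apply_eq_apply_apply hVlip hτ₀ hs hτ x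
  refine ⟨hD.differentiableAt, ?_⟩
  rw [hD.fderiv, ← map_neg]
  exact (hD.comp_hasDerivAt_of_eq τ₀ hstart (hθ τ₀ hτ₀ x).1.symm).congr_of_eventuallyEq hcocycle

/-- **Derivative of the flow with respect to the initial time.**
Let `V : ℝ × ℝⁿ → ℝⁿ` be continuous and bounded, uniformly Lipschitz in the second variable
with constant `C > 0`, such that `y ↦ V (τ, y)` is Fréchet differentiable for each `τ` and
`(τ, y) ↦ D_y V (τ, y)` is continuous. Let `I₀ = Ioo a b` be an open interval of length less
than `1/C` and let `θ` be a local flow map for `V` on `I₀`. Then for every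
`(τ, τ₀, x) ∈ I₀ × I₀ × ℝⁿ` the derivative of `θ` with respect to its second argument
exists and equals `- (D_x θ (τ, τ₀, x)) (V (τ₀, x))`, where `D_x θ (τ, τ₀, x)` is the
Fréchet derivative of `θ` with respect to its third argument (which exists). -/
theorem stmt_8 {n : ℕ} (hn : 1 ≤ n)
    (V : ℝ × EuclideanSpace ℝ (Fin n) → EuclideanSpace ℝ (Fin n))
    (C : ℝ) (hC : 0 < C)
    (hVcont : Continuous V)
    (hVbdd : ∃ M : ℝ, ∀ p, ‖V p‖ ≤ M)
    (hVlip : ∀ (τ : ℝ) (y₁ y₂ : EuclideanSpace ℝ (Fin n)),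
      ‖V (τ, y₁) - V (τ, y₂)‖ ≤ C * ‖y₁ - y₂‖)
    (hVdiff : ∀ τ : ℝ, Differentiable ℝ (fun y => V (τ, y)))
    (hDVcont : Continuous (fun p : ℝ × EuclideanSpace ℝ (Fin n) =>
      fderiv ℝ (fun y => V (p.1, y)) p.2))
    (a b : ℝ) (hab : a < b) (hlen : b - a < 1 / C)
    (θ : ℝ → ℝ → EuclideanSpace ℝ (Fin n) → EuclideanSpace ℝ (Fin n))
    (hθ : IsLocalFlowMap V (Set.Ioo a b) θ) :
    ∀ τ ∈ Set.Ioo a b, ∀ τ₀ ∈ Set.Ioo a b, ∀ x : EuclideanSpace ℝ (Fin n),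
      DifferentiableAt ℝ (fun z => θ τ τ₀ z) x ∧
      HasDerivAt (fun s => θ τ s x)
        (-(fderiv ℝ (fun z => θ τ τ₀ z) x (V (τ₀, x)))) τ₀ :=
  stmt_8_general V C hC hVcont hVbdd hVlip hVdiff hDVcont a b hlen θ hθ
end

section
/- Let a < b be real numbers, let n ≥ 1, and let V : [a, b] × ℝⁿ → ℝⁿ be continuous. Suppose y : [a, b) → ℝⁿ is differentiable with y'(τ) = V(τ, y(τ)) for all τ ∈ [a, b), and suppose the range of y is bounded. Then the limit L := lim_{τ → b⁻} y(τ) exists, and the extension ỹ : [a, b] → ℝⁿ of y with ỹ(b) = L is continuously differentiable on [a, b] (with one-sided derivatives at the endpoints) and satisfies ỹ'(τ) = V(τ, ỹ(τ)) for all τ ∈ [a, b], including ỹ'(b) = V(b, L). -/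
open Set Filter Topology Bornology

/-! A solution of `y' = V(τ, y)` staying in a bounded set `B` has derivative bounded by the maximum
of `‖V‖` on the compact set `[a, b] × closure B`, so it is Lipschitz and hence uniformly
continuous on `[a, b)`; in a complete space this gives the limit `L` at `b⁻`. Since the derivative
`V(τ, y τ)` then tends to `V(b, L)`, the extension-of-derivative theorem gives the one-sided
derivative `V(b, L)` at `b`. -/

theorem UniformContinuousOn.cauchy_map_nhdsWithin {α β : Type*} [UniformSpace α]
    [UniformSpace β] {f : α → β} {s : Set α} {x : α} [(𝓝[s] x).NeBot]
    (hf : UniformContinuousOn f s) : Cauchy ((𝓝[s] x).map f) := by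
  refine ⟨inferInstance, ?_⟩
  rw [prod_map_map_eq]
  refine le_trans (map_mono (le_inf ?_ ?_)) hf
  · exact (Filter.prod_mono nhdsWithin_le_nhds nhdsWithin_le_nhds).trans cauchy_nhds.2
  · rw [← prod_principal_principal]
    exact Filter.prod_mono (le_principal_iff.2 self_mem_nhdsWithin)
      (le_principal_iff.2 self_mem_nhdsWithin)

theorem UniformContinuousOn.exists_tendsto_nhdsWithin {α β : Type*} [UniformSpace α]
    [UniformSpace β] [CompleteSpace β] {f : α → β} {s : Set α} {x : α} [(𝓝[s] x).NeBot]
    (hf : UniformContinuousOn f s) : ∃ L, Tendsto f (𝓝[s] x) (𝓝 L) :=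
  cauchy_map_iff_exists_tendsto.1 hf.cauchy_map_nhdsWithin

section

variable {E : Type*} [NormedAddCommGroup E] [NormedSpace ℝ E]

theorem exists_lipschitzOnWith_of_hasDerivWithinAt_of_isBounded [ProperSpace E]
    {V : ℝ × E → E} {a b : ℝ} (hV : ContinuousOn V (Icc a b ×ˢ univ)) {y : ℝ → E}
    (hy : ∀ τ ∈ Ico a b, HasDerivWithinAt y (V (τ, y τ)) (Ico a b) τ)
    (hbdd : IsBounded (y '' Ico a b)) : ∃ K, LipschitzOnWith K y (Ico a b) := by
  obtain ⟨M, hM⟩ := (isCompact_Icc.prod hbdd.isCompact_closure).exists_bound_of_continuousOn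
    (hV.mono (prod_mono subset_rfl (subset_univ _)))
  have hbound : ∀ τ ∈ Ico a b, ‖V (τ, y τ)‖₊ ≤ M.toNNReal := fun τ hτ => by
    rw [← NNReal.coe_le_coe, coe_nnnorm, Real.coe_toNNReal']
    exact (hM (τ, y τ) ⟨Ico_subset_Icc_self hτ, subset_closure ⟨τ, hτ, rfl⟩⟩).trans
      (le_max_left _ _)
  exact ⟨_, (convex_Ico a b).lipschitzOnWith_of_nnnorm_hasDerivWithin_le hy hbound⟩

theorem HasDerivWithinAt.Icc_of_Ico {f : ℝ → E} {f' : E} {a b τ : ℝ} (hτ : τ < b)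
    (hf : HasDerivWithinAt f f' (Ico a b) τ) : HasDerivWithinAt f f' (Icc a b) τ :=
  hf.mono_of_mem_nhdsWithin <|
    mem_of_superset (inter_mem_nhdsWithin _ (Iio_mem_nhds hτ)) fun _ hx => ⟨hx.1.1, hx.2⟩

theorem hasDerivWithinAt_Icc_right_of_tendsto {f f' : ℝ → E} {a b : ℝ} (hab : a < b)
    (hf : ∀ x ∈ Ico a b, HasDerivWithinAt f (f' x) (Ico a b) x)
    (hf_lim : Tendsto f (𝓝[<] b) (𝓝 (f b))) (hf'_lim : Tendsto f' (𝓝[<] b) (𝓝 (f' b))) :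
    HasDerivWithinAt f (f' b) (Icc a b) b := by
  have hIoo : Ioo a b ∈ 𝓝[<] b := Ioo_mem_nhdsLT hab
  have hderiv : ∀ x ∈ Ioo a b, HasDerivAt f (f' x) x := fun x hx =>
    (hf x (Ioo_subset_Ico_self hx)).hasDerivAt
      (mem_of_superset (isOpen_Ioo.mem_nhds hx) Ioo_subset_Ico_self)
  refine (hasDerivWithinAt_Iic_of_tendsto_deriv (s := Ioo a b)
    (fun x hx => (hderiv x hx).differentiableAt.differentiableWithinAt)
    (hf_lim.mono_left (nhdsWithin_mono _ Ioo_subset_Iio_self)) hIoo ?_).mono Icc_subset_Iic_self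
  exact hf'_lim.congr' (eventually_of_mem hIoo fun x hx => (hderiv x hx).deriv.symm)

theorem hasDerivWithinAt_Icc_of_tendsto_nhdsLT {f f' : ℝ → E} {a b : ℝ} (hab : a < b)
    (hf : ∀ x ∈ Ico a b, HasDerivWithinAt f (f' x) (Ico a b) x)
    (hf_lim : Tendsto f (𝓝[<] b) (𝓝 (f b))) (hf'_lim : Tendsto f' (𝓝[<] b) (𝓝 (f' b))) :
    ∀ x ∈ Icc a b, HasDerivWithinAt f (f' x) (Icc a b) x := by
  intro x hx
  rcases hx.2.lt_or_eq with hxb | rfl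
  · exact (hf x ⟨hx.1, hxb⟩).Icc_of_Ico hxb
  · exact hasDerivWithinAt_Icc_right_of_tendsto hab hf hf_lim hf'_lim

end

theorem stmt_9_general {n : ℕ} (a b : ℝ) (hab : a < b)
    (V : ℝ × EuclideanSpace ℝ (Fin n) → EuclideanSpace ℝ (Fin n))
    (hVcont : ContinuousOn V
      (Set.Icc a b ×ˢ (Set.univ : Set (EuclideanSpace ℝ (Fin n)))))
    (y : ℝ → EuclideanSpace ℝ (Fin n))
    (hy : ∀ τ ∈ Set.Ico a b, HasDerivWithinAt y (V (τ, y τ)) (Set.Ico a b) τ)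
    (hbdd : Bornology.IsBounded (y '' Set.Ico a b)) :
    ∃ L : EuclideanSpace ℝ (Fin n),
      Filter.Tendsto y (nhdsWithin b (Set.Iio b)) (nhds L) ∧
      ∀ ytil : ℝ → EuclideanSpace ℝ (Fin n),
        (∀ τ ∈ Set.Ico a b, ytil τ = y τ) → ytil b = L →
        (∀ τ ∈ Set.Icc a b, HasDerivWithinAt ytil (V (τ, ytil τ)) (Set.Icc a b) τ) ∧
        ContinuousOn (fun τ => V (τ, ytil τ)) (Set.Icc a b) := by
  obtain ⟨K, hK⟩ := exists_lipschitzOnWith_of_hasDerivWithinAt_of_isBounded hVcont hy hbdd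
  have : (𝓝[Ico a b] b).NeBot := by rw [nhdsWithin_Ico_eq_nhdsLT hab]; infer_instance
  obtain ⟨L, hL⟩ := hK.uniformContinuousOn.exists_tendsto_nhdsWithin (x := b)
  rw [nhdsWithin_Ico_eq_nhdsLT hab] at hL
  refine ⟨L, hL, fun ytil hEq hb => ?_⟩
  have hytil : ∀ τ ∈ Ico a b, HasDerivWithinAt ytil (V (τ, ytil τ)) (Ico a b) τ :=
    fun τ hτ => by simpa only [hEq τ hτ] using (hy τ hτ).congr hEq (hEq τ hτ)
  have hytil_lim : Tendsto ytil (𝓝[<] b) (𝓝 (ytil b)) :=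
    hb ▸ hL.congr' (eventually_of_mem (Ioo_mem_nhdsLT hab) fun τ hτ =>
      (hEq τ ⟨hτ.1.le, hτ.2⟩).symm)
  have hV_lim : Tendsto (fun τ => V (τ, ytil τ)) (𝓝[<] b) (𝓝 (V (b, ytil b))) :=
    (hVcont _ ⟨right_mem_Icc.2 hab.le, mem_univ _⟩).tendsto.comp <| tendsto_nhdsWithin_iff.2
      ⟨(tendsto_nhdsWithin_of_tendsto_nhds tendsto_id).prodMk_nhds hytil_lim,
        eventually_of_mem (Ioc_mem_nhdsLT hab) fun _ hτ =>
          ⟨Ioc_subset_Icc_self hτ, mem_univ _⟩⟩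
  have hderiv := hasDerivWithinAt_Icc_of_tendsto_nhdsLT hab hytil hytil_lim hV_lim
  have hcont : ContinuousOn ytil (Icc a b) := fun τ hτ => (hderiv τ hτ).continuousWithinAt
  exact ⟨hderiv, hVcont.comp (continuousOn_id.prodMk hcont) fun τ hτ => ⟨hτ, mem_univ _⟩⟩

/-- **Extension of bounded solutions to the endpoint.**
Let `a < b`, `n ≥ 1`, and let `V : [a, b] × ℝⁿ → ℝⁿ` be continuous. Suppose
`y : [a, b) → ℝⁿ` is differentiable with `y' τ = V (τ, y τ)` on `[a, b)` and has bounded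
range. Then `L := lim_{τ → b⁻} y τ` exists, and the extension `ỹ` of `y` to `[a, b]` with
`ỹ b = L` is continuously differentiable on `[a, b]` (derivatives at the endpoints being
one-sided) with `ỹ' τ = V (τ, ỹ τ)` for all `τ ∈ [a, b]`, including `ỹ' b = V (b, L)`. -/
theorem stmt_9 {n : ℕ} (hn : 1 ≤ n) (a b : ℝ) (hab : a < b)
    (V : ℝ × EuclideanSpace ℝ (Fin n) → EuclideanSpace ℝ (Fin n))
    (hVcont : ContinuousOn V
      (Set.Icc a b ×ˢ (Set.univ : Set (EuclideanSpace ℝ (Fin n)))))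
    (y : ℝ → EuclideanSpace ℝ (Fin n))
    (hy : ∀ τ ∈ Set.Ico a b, HasDerivWithinAt y (V (τ, y τ)) (Set.Ico a b) τ)
    (hbdd : Bornology.IsBounded (y '' Set.Ico a b)) :
    ∃ L : EuclideanSpace ℝ (Fin n),
      Filter.Tendsto y (nhdsWithin b (Set.Iio b)) (nhds L) ∧
      ∀ ytil : ℝ → EuclideanSpace ℝ (Fin n),
        (∀ τ ∈ Set.Ico a b, ytil τ = y τ) → ytil b = L →
        (∀ τ ∈ Set.Icc a b, HasDerivWithinAt ytil (V (τ, ytil τ)) (Set.Icc a b) τ) ∧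
        ContinuousOn (fun τ => V (τ, ytil τ)) (Set.Icc a b) :=
  stmt_9_general a b hab V hVcont y hy hbdd
end

section
/- Let κ > 0, δ ∈ (0, 1), M ≥ 0, and let t : [−δ, 0) → ℝ be differentiable with |t'(τ) + 1/(κτ)| ≤ M for all τ ∈ [−δ, 0). Then there exist constants C₁, C₂ > 0 such that C₁ e^{−κ·t(τ)} ≤ |τ| ≤ C₂ e^{−κ·t(τ)} for all τ ∈ [−δ, 0). -/
/-- **Comparison `|τ| ∼ e^{-κ t(τ)}` along geodesics.**
Let `κ > 0`, `δ ∈ (0, 1)`, `M ≥ 0`, and let `t : [-δ, 0) → ℝ` be differentiable with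
`|t' τ + 1/(κ τ)| ≤ M` for all `τ ∈ [-δ, 0)`. Then there are constants `C₁, C₂ > 0` such
that `C₁ * exp (-κ * t τ) ≤ |τ| ≤ C₂ * exp (-κ * t τ)` for all `τ ∈ [-δ, 0)`. -/
theorem stmt_11 (κ δ M : ℝ) (hκ : 0 < κ) (hδ0 : 0 < δ) (hδ1 : δ < 1) (hM : 0 ≤ M)
    (t t' : ℝ → ℝ)
    (hderiv : ∀ τ ∈ Set.Ico (-δ) (0 : ℝ),
      HasDerivWithinAt t (t' τ) (Set.Ico (-δ) (0 : ℝ)) τ)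
    (hbound : ∀ τ ∈ Set.Ico (-δ) (0 : ℝ), |t' τ + 1 / (κ * τ)| ≤ M) :
    ∃ C₁ C₂ : ℝ, 0 < C₁ ∧ 0 < C₂ ∧
      ∀ τ ∈ Set.Ico (-δ) (0 : ℝ),
        C₁ * Real.exp (-κ * t τ) ≤ |τ| ∧ |τ| ≤ C₂ * Real.exp (-κ * t τ) := by
  set s : Set ℝ := Set.Ico (-δ) (0 : ℝ) with hs
  set g : ℝ → ℝ := fun τ => κ * t τ + Real.log (-τ) with hg
  have hτne : ∀ τ ∈ s, τ ≠ 0 := fun τ hτ => ne_of_lt hτ.2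
  have hgderiv : ∀ τ ∈ s, HasDerivWithinAt g (κ * t' τ + 1/τ) s τ := by
    intro τ hτ
    have hne : -τ ≠ 0 := neg_ne_zero.mpr (hτne τ hτ)
    have hlog : HasDerivAt (fun x => Real.log (-x)) ((-τ)⁻¹ * (-1)) τ :=
      (Real.hasDerivAt_log hne).comp τ (hasDerivAt_neg τ)
    have h1 : (-τ)⁻¹ * (-1) = 1/τ := by
      field_simp
    rw [h1] at hlog
    exact ((hderiv τ hτ).const_mul κ).add hlog.hasDerivWithinAt
  have hgbound : ∀ τ ∈ s, ‖κ * t' τ + 1/τ‖ ≤ κ * M := by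
    intro τ hτ
    have hne : τ ≠ 0 := hτne τ hτ
    have h1 : κ * t' τ + 1/τ = κ * (t' τ + 1/(κ*τ)) := by
      field_simp
    rw [h1, Real.norm_eq_abs, abs_mul, abs_of_pos hκ]
    exact mul_le_mul_of_nonneg_left (hbound τ hτ) hκ.le
  have hδmem : -δ ∈ s := ⟨le_refl _, by linarith⟩
  have hlip : ∀ τ ∈ s, |g τ - g (-δ)| ≤ κ * M := by
    intro τ hτ
    have := (convex_Ico (-δ) (0:ℝ)).norm_image_sub_le_of_norm_hasDerivWithin_le
      hgderiv hgbound hδmem hτ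
    rw [Real.norm_eq_abs] at this
    calc |g τ - g (-δ)| ≤ κ * M * ‖τ - (-δ)‖ := this
      _ ≤ κ * M * 1 := by
          apply mul_le_mul_of_nonneg_left _ (by positivity)
          rw [Real.norm_eq_abs]
          have h1 : τ + δ ≥ 0 := by linarith [hτ.1]
          have h2 : τ < 0 := hτ.2
          rw [abs_of_nonneg (by linarith : τ - (-δ) ≥ 0)]
          linarith
      _ = κ * M := mul_one _
  refine ⟨Real.exp (g (-δ) - κ * M), Real.exp (g (-δ) + κ * M),
    Real.exp_pos _, Real.exp_pos _, ?_⟩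
  intro τ hτ
  have hτneg : τ < 0 := hτ.2
  have habs : |τ| = Real.exp (g τ) * Real.exp (-κ * t τ) := by
    rw [← Real.exp_add]
    have : g τ + -κ * t τ = Real.log (-τ) := by simp only [hg]; ring
    rw [this, Real.exp_log (by linarith), abs_of_neg hτneg]
  have hb := abs_le.mp (hlip τ hτ)
  constructor
  · rw [habs]
    apply mul_le_mul_of_nonneg_right _ (Real.exp_pos _).le
    exact Real.exp_le_exp.mpr (by linarith [hb.1])
  · rw [habs]
    apply mul_le_mul_of_nonneg_right _ (Real.exp_pos _).le
    exact Real.exp_le_exp.mpr (by linarith [hb.2])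
end

section
/- Suppose in addition the unit-speed condition x'(t)² + y'(t)² = y(t)² e^{2ε·x(t)} holds for all t ∈ J. Then the normalized velocity v_x(t) := x'(t)/(y(t)² e^{2ε·x(t)}) is differentiable on J with v_x'(t) = −ε for all t ∈ J; consequently v_x(t) = v_x(t₀) − ε(t − t₀) for all t, t₀ ∈ J. -/
/-!
Along a geodesic, `x'' = 2 x' y' / y + ε (x'² - y'²)`, while the logarithmic derivative of
`D = y² e^{2εx}` is `2 y'/y + 2 ε x'`. Hence `(x'/D)' = (x'' - x' (2 y'/y + 2 ε x')) / D
= -ε (x'² + y'²) / D`, and unit speed `x'² + y'² = D` makes this `-ε`. A function with constant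
derivative on an interval is affine.
-/

theorem Convex.eq_add_sub_smul_of_hasDerivWithinAt {E : Type*} [NormedAddCommGroup E]
    [NormedSpace ℝ E] {J : Set ℝ} (hJ : Convex ℝ J) {f : ℝ → E} {c : E}
    (hf : ∀ t ∈ J, HasDerivWithinAt f c J t) {t t₀ : ℝ} (ht : t ∈ J) (ht₀ : t₀ ∈ J) :
    f t = f t₀ + (t - t₀) • c := by
  have hg : ∀ s ∈ J, HasDerivWithinAt (fun s => f s - s • c) 0 J s := fun s hs => by
    simpa using (hf s hs).fun_sub ((hasDerivWithinAt_id s J).smul_const c)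
  have hconst := hJ.norm_image_sub_le_of_norm_hasDerivWithin_le (C := 0) hg (by simp) ht₀ ht
  rw [zero_mul, norm_le_zero_iff, sub_eq_zero] at hconst
  linear_combination (norm := module) hconst

theorem HasDerivWithinAt.sq_mul_exp_const_mul {x y : ℝ → ℝ} {x' y' t : ℝ} {J : Set ℝ}
    (hx : HasDerivWithinAt x x' J t) (hy : HasDerivWithinAt y y' J t) (ε : ℝ) :
    HasDerivWithinAt (fun s => y s ^ 2 * Real.exp (2 * ε * x s))
      (y t ^ 2 * Real.exp (2 * ε * x t) * (2 * ε * x') + 2 * y t * y' * Real.exp (2 * ε * x t))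
      J t := by
  have hsq : HasDerivWithinAt (fun s => y s ^ 2) (2 * y t * y') J t := by
    simpa [mul_comm, mul_assoc, mul_left_comm] using hy.fun_pow 2
  have hexp := (hx.const_mul (2 * ε)).exp
  exact (hsq.fun_mul hexp).congr_deriv (by ring)

theorem hasDerivWithinAt_geodesic_normalizedVelocity {x y x' : ℝ → ℝ} {y' x'' ε t : ℝ}
    {J : Set ℝ} (hx : HasDerivWithinAt x (x' t) J t) (hx' : HasDerivWithinAt x' x'' J t)
    (hy : HasDerivWithinAt y y' J t) (hy0 : y t ≠ 0)
    (hgeo : x'' - (2 / y t) * x' t * y' - ε * (x' t ^ 2 - y' ^ 2) = 0)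
    (hunit : x' t ^ 2 + y' ^ 2 = y t ^ 2 * Real.exp (2 * ε * x t)) :
    HasDerivWithinAt (fun s => x' s / (y s ^ 2 * Real.exp (2 * ε * x s))) (-ε) J t := by
  have hD : y t ^ 2 * Real.exp (2 * ε * x t) ≠ 0 := by positivity
  refine (hx'.fun_div (hx.sq_mul_exp_const_mul hy ε) hD).congr_deriv ?_
  have hgeo' : x'' * y t = 2 * x' t * y' + ε * y t * (x' t ^ 2 - y' ^ 2) := by
    field_simp at hgeo
    linear_combination hgeo
  field_simp
  linear_combination (norm := ring_nf) hgeo' - ε * y t * hunit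

theorem stmt_13_general (ε : ℝ) (J : Set ℝ) (hJ : J.OrdConnected)
    (x y x' y' x'' : ℝ → ℝ)
    (hx : ∀ t ∈ J, HasDerivWithinAt x (x' t) J t)
    (hx' : ∀ t ∈ J, HasDerivWithinAt x' (x'' t) J t)
    (hy : ∀ t ∈ J, HasDerivWithinAt y (y' t) J t)
    (hypos : ∀ t ∈ J, 0 < y t)
    (hgeo1 : ∀ t ∈ J,
      x'' t - (2 / y t) * x' t * y' t - ε * ((x' t) ^ 2 - (y' t) ^ 2) = 0)
    (hunit : ∀ t ∈ J,
      (x' t) ^ 2 + (y' t) ^ 2 = (y t) ^ 2 * Real.exp (2 * ε * x t)) :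
    (∀ t ∈ J, HasDerivWithinAt
        (fun s => x' s / ((y s) ^ 2 * Real.exp (2 * ε * x s))) (-ε) J t) ∧
    ∀ t ∈ J, ∀ t₀ ∈ J,
      x' t / ((y t) ^ 2 * Real.exp (2 * ε * x t)) =
        x' t₀ / ((y t₀) ^ 2 * Real.exp (2 * ε * x t₀)) - ε * (t - t₀) := by
  have hderiv : ∀ t ∈ J, HasDerivWithinAt
      (fun s => x' s / ((y s) ^ 2 * Real.exp (2 * ε * x s))) (-ε) J t := fun t ht =>
    hasDerivWithinAt_geodesic_normalizedVelocity (hx t ht) (hx' t ht) (hy t ht) (hypos t ht).ne'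
      (hgeo1 t ht) (hunit t ht)
  refine ⟨hderiv, fun t ht t₀ ht₀ => ?_⟩
  rw [hJ.convex.eq_add_sub_smul_of_hasDerivWithinAt hderiv ht ht₀, smul_eq_mul]
  ring

/-- **Linear decay of the normalized horizontal velocity.**
Let `J ⊆ ℝ` be an interval and let `x, y : J → ℝ` with `y > 0` be twice differentiable
solutions of the geodesic equations of `g_ε = (dx² + dy²)/(y² e^{2εx})`, satisfying in
addition the unit-speed condition `x'² + y'² = y² e^{2εx}` on `J`. Then the normalized
velocity `v_x := x'/(y² e^{2εx})` is differentiable on `J` with `v_x' = -ε`; consequently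
`v_x t = v_x t₀ - ε (t - t₀)` for all `t, t₀ ∈ J`. -/
theorem stmt_13 (ε : ℝ) (J : Set ℝ) (hJ : J.OrdConnected)
    (x y x' y' x'' y'' : ℝ → ℝ)
    (hx : ∀ t ∈ J, HasDerivWithinAt x (x' t) J t)
    (hx' : ∀ t ∈ J, HasDerivWithinAt x' (x'' t) J t)
    (hy : ∀ t ∈ J, HasDerivWithinAt y (y' t) J t)
    (hy' : ∀ t ∈ J, HasDerivWithinAt y' (y'' t) J t)
    (hypos : ∀ t ∈ J, 0 < y t)
    (hgeo1 : ∀ t ∈ J,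
      x'' t - (2 / y t) * x' t * y' t - ε * ((x' t) ^ 2 - (y' t) ^ 2) = 0)
    (hgeo2 : ∀ t ∈ J,
      y'' t + (1 / y t) * ((x' t) ^ 2 - (y' t) ^ 2) - 2 * ε * x' t * y' t = 0)
    (hunit : ∀ t ∈ J,
      (x' t) ^ 2 + (y' t) ^ 2 = (y t) ^ 2 * Real.exp (2 * ε * x t)) :
    (∀ t ∈ J, HasDerivWithinAt
        (fun s => x' s / ((y s) ^ 2 * Real.exp (2 * ε * x s))) (-ε) J t) ∧
    ∀ t ∈ J, ∀ t₀ ∈ J,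
      x' t / ((y t) ^ 2 * Real.exp (2 * ε * x t)) =
        x' t₀ / ((y t₀) ^ 2 * Real.exp (2 * ε * x t₀)) - ε * (t - t₀) :=
  stmt_13_general ε J hJ x y x' y' x'' hx hx' hy hypos hgeo1 hunit
end

section
/- Let δ ∈ (0, 1), A, B ∈ ℝ, C ≥ 0, and let f : [−δ, 0] → ℝ be continuous with f(0) = 0 and differentiable on [−δ, 0), satisfying |f'(τ) − A·τ·log|τ| − B·τ| ≤ C·τ²·|log|τ|| for all τ ∈ [−δ, 0). Then for all τ ∈ [−δ, 0) one has |f(τ) − (A/2)·τ²·log|τ| + (A/4)·τ² − (B/2)·τ²| ≤ C·(|τ|³·|log|τ||/3 + |τ|³/9). -/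
/-!
Subtract from `f` the explicit primitive `P t = (A/2) t² log|t| - (A/4) t² + (B/2) t²` of
`A t log|t| + B t`. Then `g = f - P` vanishes at `0` and `|g' t| ≤ -C t² log|t|` on `[-δ, 0)`,
because `log|t| ≤ 0` there. The right-hand side is the derivative of
`φ t = C (t³/9 - t³ log|t| / 3)`, which is continuous with `φ 0 = 0`, so the mean value
inequality on `[τ, 0]` gives `|g τ| ≤ φ 0 - φ τ`, which is the claimed bound.

Mathlib's `log` is even (`Real.log_abs`), so `log t` stands for `log |t|` below, and
`t ^ (n + 1) * log t` is continuous at `0` thanks to the convention `log 0 = 0`.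
-/

open Set Real

theorem Real.continuous_pow_succ_mul_log (n : ℕ) :
    Continuous fun t : ℝ => t ^ (n + 1) * log t := by
  simpa only [pow_succ, mul_assoc] using (continuous_pow n).fun_mul continuous_mul_log

theorem Real.hasDerivAt_pow_succ_mul_log (n : ℕ) {x : ℝ} (hx : x ≠ 0) :
    HasDerivAt (fun t : ℝ => t ^ (n + 1) * log t) ((n + 1) * x ^ n * log x + x ^ n) x := by
  refine ((hasDerivAt_pow (n + 1) x).mul (hasDerivAt_log hx)).congr_deriv ?_
  rw [pow_succ]
  field_simp
  push_cast
  ring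

theorem Real.hasDerivAt_sq_mul_log_primitive (A B : ℝ) {t : ℝ} (ht : t ≠ 0) :
    HasDerivAt (fun t => A / 2 * (t ^ 2 * log t) - A / 4 * t ^ 2 + B / 2 * t ^ 2)
      (A * t * log t + B * t) t := by
  refine ((((hasDerivAt_pow_succ_mul_log 1 ht).const_mul (A / 2)).sub
    ((hasDerivAt_pow 2 t).const_mul (A / 4))).add
      ((hasDerivAt_pow 2 t).const_mul (B / 2))).congr_deriv ?_
  push_cast
  ring

theorem Real.hasDerivAt_cube_mul_log_primitive (C : ℝ) {t : ℝ} (ht : t ≠ 0) :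
    HasDerivAt (fun t => C * (t ^ 3 / 9 - t ^ 3 * log t / 3)) (C * t ^ 2 * -log t) t := by
  refine ((((hasDerivAt_pow 3 t).div_const 9).sub
    ((hasDerivAt_pow_succ_mul_log 2 ht).div_const 3)).const_mul C).congr_deriv ?_
  push_cast
  ring

theorem abs_sub_le_of_abs_deriv_right_le_deriv {g g' φ φ' : ℝ → ℝ} {a b : ℝ}
    (hab : a ≤ b) (hg : ContinuousOn g (Icc a b))
    (hg' : ∀ x ∈ Ico a b, HasDerivWithinAt g (g' x) (Ici x) x)
    (hφ : ContinuousOn φ (Icc a b))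
    (hφ' : ∀ x ∈ Ico a b, HasDerivWithinAt φ (φ' x) (Ici x) x)
    (bound : ∀ x ∈ Ico a b, |g' x| ≤ φ' x) :
    |g b - g a| ≤ φ b - φ a :=
  image_norm_le_of_norm_deriv_right_le_deriv_boundary' (f := fun x => g x - g a)
    (B := fun x => φ x - φ a) (hg.sub continuousOn_const)
    (fun x hx => (hg' x hx).sub_const _) (by simp) (hφ.sub continuousOn_const)
    (fun x hx => (hφ' x hx).sub_const _) bound ⟨hab, le_rfl⟩

theorem stmt_16_general (δ A B C : ℝ) (hδ1 : δ < 1)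
    (f f' : ℝ → ℝ)
    (hcont : ContinuousOn f (Set.Icc (-δ) 0))
    (hf0 : f 0 = 0)
    (hderiv : ∀ τ ∈ Set.Ico (-δ) (0 : ℝ),
      HasDerivWithinAt f (f' τ) (Set.Ico (-δ) (0 : ℝ)) τ)
    (hbound : ∀ τ ∈ Set.Ico (-δ) (0 : ℝ),
      |f' τ - A * τ * Real.log |τ| - B * τ| ≤ C * τ ^ 2 * abs (Real.log |τ|)) :
    ∀ τ ∈ Set.Ico (-δ) (0 : ℝ),
      |f τ - (A / 2) * τ ^ 2 * Real.log |τ| + (A / 4) * τ ^ 2 - (B / 2) * τ ^ 2| ≤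
        C * (|τ| ^ 3 * abs (Real.log |τ|) / 3 + |τ| ^ 3 / 9) := by
  intro τ hτ
  set P : ℝ → ℝ := fun t => A / 2 * (t ^ 2 * log t) - A / 4 * t ^ 2 + B / 2 * t ^ 2
  set φ : ℝ → ℝ := fun t => C * (t ^ 3 / 9 - t ^ 3 * log t / 3)
  have hP : Continuous P := by
    have := continuous_pow_succ_mul_log 1
    fun_prop
  have hφ : Continuous φ := by
    have := continuous_pow_succ_mul_log 2
    fun_prop
  have habs_log : ∀ t ∈ Ico (-δ) 0, |log t| = -log t := fun t ht =>
    abs_of_nonpos <| log_abs t ▸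
      log_nonpos (abs_nonneg t) (by rw [abs_of_neg ht.2]; linarith [ht.1])
  have hsub : Ico τ 0 ⊆ Ico (-δ) 0 := Ico_subset_Ico_left hτ.1
  have key := abs_sub_le_of_abs_deriv_right_le_deriv (g := f - P) (φ := φ) hτ.2.le
    ((hcont.mono (Icc_subset_Icc_left hτ.1)).sub hP.continuousOn)
    (fun t ht => ((hderiv t (hsub ht)).mono_of_mem_nhdsWithin
      (Ico_mem_nhdsGE_of_mem (hsub ht))).sub
        (hasDerivAt_sq_mul_log_primitive A B ht.2.ne).hasDerivWithinAt)
    hφ.continuousOn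
    (fun t ht => (hasDerivAt_cube_mul_log_primitive C ht.2.ne).hasDerivWithinAt)
    (fun t ht => by
      simpa only [Pi.sub_apply, sub_sub, log_abs, habs_log t (hsub ht)]
        using hbound t (hsub ht))
  simp only [Pi.sub_apply, hf0, P, φ, log_zero] at key
  rw [log_abs, habs_log τ hτ, abs_of_neg hτ.2, ← abs_neg]
  convert key using 2 <;> ring

/-- **Integration of a `τ log|τ|` leading-order derivative from the boundary.**
Let `δ ∈ (0, 1)`, `A, B ∈ ℝ`, `C ≥ 0`, and let `f : [-δ, 0] → ℝ` be continuous with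
`f 0 = 0` and differentiable on `[-δ, 0)` with
`|f' τ - A τ log|τ| - B τ| ≤ C τ² |log|τ||` there. Then for all `τ ∈ [-δ, 0)`,
`|f τ - (A/2) τ² log|τ| + (A/4) τ² - (B/2) τ²| ≤ C (|τ|³ |log|τ|| / 3 + |τ|³ / 9)`. -/
theorem stmt_16 (δ A B C : ℝ) (hδ0 : 0 < δ) (hδ1 : δ < 1) (hC : 0 ≤ C)
    (f f' : ℝ → ℝ)
    (hcont : ContinuousOn f (Set.Icc (-δ) 0))
    (hf0 : f 0 = 0)
    (hderiv : ∀ τ ∈ Set.Ico (-δ) (0 : ℝ),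
      HasDerivWithinAt f (f' τ) (Set.Ico (-δ) (0 : ℝ)) τ)
    (hbound : ∀ τ ∈ Set.Ico (-δ) (0 : ℝ),
      |f' τ - A * τ * Real.log |τ| - B * τ| ≤ C * τ ^ 2 * abs (Real.log |τ|)) :
    ∀ τ ∈ Set.Ico (-δ) (0 : ℝ),
      |f τ - (A / 2) * τ ^ 2 * Real.log |τ| + (A / 4) * τ ^ 2 - (B / 2) * τ ^ 2| ≤
        C * (|τ| ^ 3 * abs (Real.log |τ|) / 3 + |τ| ^ 3 / 9) :=
  stmt_16_general δ A B C hδ1 f f' hcont hf0 hderiv hbound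
end
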